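/- arXiv:1712.08016 — 10 statements merged into one kernel-verified Lean document; each statement's English description precedes it below -/
import Mathlib

section
/- Let n ≥ 2 and let q1, q3 be invertible elements of a commutative ring; set q2 := (q1 q3)^{−1}. Let λ be a Young diagram, let k be such that λ + 1_k is a Young diagram, and let ℓ be a residue mod n with ℓ ≡ k − λ_k − 1 (mod n). Then, with x_s := q1^{λ_s−1} q3^{s−1} computed from λ, C_{λ+1_k}(q1,q3) · ∏_{1≤j≤k−1, j−λ_j ≡ ℓ (mod n)} (1 − q1^{−1} x_j x_k^{−1}) · ∏_{k+1≤j≤ℓ(λ), j−λ_j ≡ ℓ (mod n)} (1 − q3^{−1} x_k x_j^{−1}) = C_λ(q1,q3) · ∏_{1≤j≤k−1, j−λ_j ≡ ℓ+1 (mod n)} (1 − q2 x_j x_k^{−1}) · ∏_{k+1≤j≤ℓ(λ)+1, j−λ_j ≡ ℓ+1 (mod n)} (1 − x_k x_j^{−1}). -/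
open Finset

/-- Arm length of the (0-based) box `c`: `a_λ(i,j) = λ_i - j` in 1-based coordinates. -/
def armZ (μ : YoungDiagram) (c : ℕ × ℕ) : ℤ := (μ.rowLen c.1 : ℤ) - c.2 - 1

/-- Leg length of the (0-based) box `c`: `ℓ_λ(i,j) = λ'_j - i` in 1-based coordinates. -/
def legZ (μ : YoungDiagram) (c : ℕ × ℕ) : ℤ := (μ.colLen c.2 : ℤ) - c.1 - 1

/-- Hook length `h_λ(s) = a_λ(s) + ℓ_λ(s) + 1`. -/
def hookZ (μ : YoungDiagram) (c : ℕ × ℕ) : ℤ := armZ μ c + legZ μ c + 1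

/-- The normalization factor
`C_λ(q1,q3) = ∏_{s ∈ λ, h_λ(s) ≡ 0 (mod n)} (1 - q1^{a_λ(s)} q3^{-ℓ_λ(s)-1})`. -/
def normC {R : Type*} [CommRing R] (n : ℕ) (q1 q3 : Rˣ) (μ : YoungDiagram) : R :=
  ∏ c ∈ μ.cells.filter (fun c => ((hookZ μ c : ZMod n) = 0)),
    (1 - ((q1 ^ armZ μ c * q3 ^ (-legZ μ c - 1) : Rˣ) : R))

/- ### Auxiliary lemmas -/

lemma rowLen_eq_of {ν : YoungDiagram} {i r : ℕ} (h : ∀ j, (i, j) ∈ ν ↔ j < r) :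
    ν.rowLen i = r := by
  by_contra hne
  rcases Nat.lt_or_ge (ν.rowLen i) r with hh | hh
  · have := YoungDiagram.mem_iff_lt_rowLen.mp ((h _).mpr hh)
    omega
  · have hmem : (i, r) ∈ ν := YoungDiagram.mem_iff_lt_rowLen.mpr (by omega)
    have := (h r).mp hmem
    omega

lemma colLen_eq_of {ν : YoungDiagram} {j r : ℕ} (h : ∀ i, (i, j) ∈ ν ↔ i < r) :
    ν.colLen j = r := by
  by_contra hne
  rcases Nat.lt_or_ge (ν.colLen j) r with hh | hh
  · have := YoungDiagram.mem_iff_lt_colLen.mp ((h _).mpr hh)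
    omega
  · have hmem : (r, j) ∈ ν := YoungDiagram.mem_iff_lt_colLen.mpr (by omega)
    have := (h r).mp hmem
    omega

section Struct
variable {μ μ' : YoungDiagram} {k : ℕ}
  (hadd : μ'.cells = insert (k, μ.rowLen k) μ.cells)
include hadd

lemma hup : ∀ i, i < k → μ.rowLen k < μ.rowLen i := by
  intro i hi
  have h0 : (k, μ.rowLen k) ∈ μ' := by
    rw [← YoungDiagram.mem_cells, hadd]; exact Finset.mem_insert_self _ _
  have h1 : (i, μ.rowLen k) ∈ μ' := μ'.up_left_mem (le_of_lt hi) le_rfl h0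
  rw [← YoungDiagram.mem_cells, hadd, Finset.mem_insert] at h1
  rcases h1 with h1 | h1
  · exact absurd (congrArg Prod.fst h1) (by simpa using hi.ne)
  · exact YoungDiagram.mem_iff_lt_rowLen.mp ((YoungDiagram.mem_cells _).mp h1)

lemma hrow' : ∀ i, μ'.rowLen i = if i = k then μ.rowLen k + 1 else μ.rowLen i := by
  intro i
  apply rowLen_eq_of
  intro j
  rw [← YoungDiagram.mem_cells, hadd, Finset.mem_insert]
  simp only [YoungDiagram.mem_cells, YoungDiagram.mem_iff_lt_rowLen, Prod.mk.injEq]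
  split_ifs with h
  · subst h
    constructor
    · rintro (⟨-, rfl⟩ | hj) <;> omega
    · intro hj
      rcases eq_or_lt_of_le (Nat.lt_succ_iff.mp hj) with rfl | h'
      · exact Or.inl ⟨rfl, rfl⟩
      · exact Or.inr h'
  · constructor
    · rintro (⟨h1, -⟩ | hj)
      · exact absurd h1 h
      · exact hj
    · exact Or.inr

lemma hcolm : μ.colLen (μ.rowLen k) = k := by
  apply colLen_eq_of
  intro i
  rw [YoungDiagram.mem_iff_lt_rowLen]
  constructor
  · intro h
    by_contra hik
    have := μ.rowLen_anti k i (by omega)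
    omega
  · intro h
    exact hup hadd i h

lemma hcol' : ∀ j, μ'.colLen j = if j = μ.rowLen k then k + 1 else μ.colLen j := by
  intro j
  apply colLen_eq_of
  intro i
  rw [← YoungDiagram.mem_cells, hadd, Finset.mem_insert]
  simp only [YoungDiagram.mem_cells, YoungDiagram.mem_iff_lt_colLen, Prod.mk.injEq]
  split_ifs with h
  · subst h
    rw [hcolm hadd]
    constructor
    · rintro (⟨rfl, -⟩ | hi) <;> omega
    · intro hi
      rcases eq_or_lt_of_le (Nat.lt_succ_iff.mp hi) with rfl | h'
      · exact Or.inl ⟨rfl, rfl⟩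
      · exact Or.inr h'
  · constructor
    · rintro (⟨-, h2⟩ | hi)
      · exact absurd h2 h
      · exact hi
    · exact Or.inr

lemma hkL : k ≤ μ.colLen 0 := by
  rcases Nat.eq_zero_or_pos k with rfl | hk
  · omega
  have h1 := hup hadd (k - 1) (by omega)
  have h2 : (k - 1, 0) ∈ μ := YoungDiagram.mem_iff_lt_rowLen.mpr (by omega)
  have := YoungDiagram.mem_iff_lt_colLen.mp h2
  omega

end Struct

lemma hL0 (μ : YoungDiagram) : μ.rowLen (μ.colLen 0) = 0 := by
  by_contra h
  have h2 : (μ.colLen 0, 0) ∈ μ := YoungDiagram.mem_iff_lt_rowLen.mpr (by omega)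
  have := YoungDiagram.mem_iff_lt_colLen.mp h2
  omega

lemma hcblock (μ : YoungDiagram) : ∀ t j, μ.rowLen (t + 1) ≤ j → j < μ.rowLen t →
    μ.colLen j = t + 1 := by
  intro t j h1 h2
  apply colLen_eq_of
  intro i
  rw [YoungDiagram.mem_iff_lt_rowLen]
  constructor
  · intro h
    by_contra hik
    have := μ.rowLen_anti (t + 1) i (by omega)
    omega
  · intro h
    have := μ.rowLen_anti i t (by omega)
    omega

/- ### if-congruence helpers -/

lemma ifshiftYX {R : Type*} [CommRing R] (n : ℕ) (X Y C : ℤ) (y : ZMod n)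
    (hy : y = ((Y : ℤ) : ZMod n)) (h : Y - X = C) (r s : R) (hrs : r = s) :
    (if ((X : ZMod n) = y) then r else 1) = (if (((C : ℤ) : ZMod n) = 0) then s else 1) := by
  subst hrs hy h
  apply if_congr _ rfl rfl
  push_cast
  rw [sub_eq_zero, eq_comm]

lemma ifshiftXY {R : Type*} [CommRing R] (n : ℕ) (X Y C : ℤ) (y : ZMod n)
    (hy : y = ((Y : ℤ) : ZMod n)) (h : X - Y = C) (r s : R) (hrs : r = s) :
    (if ((X : ZMod n) = y) then r else 1) = (if (((C : ℤ) : ZMod n) = 0) then s else 1) := by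
  subst hrs hy h
  apply if_congr _ rfl rfl
  push_cast
  rw [sub_eq_zero]

lemma ifcong0 {R : Type*} [CommRing R] (n : ℕ) (C C' : ℤ) (h : C = C') (r s : R)
    (hrs : r = s) :
    (if (((C : ℤ) : ZMod n) = 0) then r else 1)
      = (if (((C' : ℤ) : ZMod n) = 0) then s else 1) := by
  subst h hrs; rfl

lemma valcong {R : Type*} [CommRing R] (q1 q3 : Rˣ) (a b a' b' : ℤ) (ha : a = a')
    (hb : b = b') :
    (1 : R) - ((q1 ^ a * q3 ^ b : Rˣ) : R) = 1 - ((q1 ^ a' * q3 ^ b' : Rˣ) : R) := by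
  subst ha hb; rfl

lemma valcong' {R : Type*} [CommRing R] (q1 q3 : Rˣ) (a b a' b' : ℤ) (ha : a' - 1 = a)
    (hb : b' - 1 = b) :
    (1 : R) - ((q1 ^ a * q3 ^ b : Rˣ) : R)
      = 1 - (((q1 * q3)⁻¹ * (q1 ^ a' * q3 ^ b') : Rˣ) : R) := by
  subst ha hb
  congr 1
  congr 1
  rw [zpow_sub, zpow_sub, zpow_one, mul_inv]
  simp [div_eq_mul_inv, mul_comm, mul_left_comm, mul_assoc]

/- ### product machinery -/

def tfun {R : Type*} [CommRing R] (n : ℕ) (q1 q3 : Rˣ) (ν : YoungDiagram) (c : ℕ × ℕ) : R :=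
  if ((hookZ ν c : ZMod n) = 0) then
    (1 : R) - ((q1 ^ armZ ν c * q3 ^ (-legZ ν c - 1) : Rˣ) : R) else 1

def Gfun {R : Type*} [CommRing R] (n : ℕ) (q1 q3 : Rˣ) (m k x t : ℕ) : R :=
  if ((((m : ℤ) - (x : ℤ) + (t : ℤ) - (k : ℤ) : ℤ) : ZMod n) = 0) then
    (1 : R) - ((q1 ^ ((m : ℤ) - (x : ℤ)) * q3 ^ ((k : ℤ) - (t : ℤ)) : Rˣ) : R) else 1

lemma normC_eq {R : Type*} [CommRing R] (n : ℕ) (q1 q3 : Rˣ) (ν : YoungDiagram) :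
    normC n q1 q3 ν = ∏ c ∈ ν.cells, tfun n q1 q3 ν c := by
  rw [normC, Finset.prod_filter]; rfl

lemma split3 {R : Type*} [CommRing R] (s : Finset (ℕ × ℕ)) (f : ℕ × ℕ → R) (k m : ℕ) :
    ∏ c ∈ s, f c = (∏ c ∈ s.filter (fun c => c.1 = k), f c) *
      (∏ c ∈ s.filter (fun c => ¬ c.1 = k ∧ c.2 = m), f c) *
      (∏ c ∈ s.filter (fun c => ¬ c.1 = k ∧ ¬ c.2 = m), f c) := by
  rw [← Finset.prod_filter_mul_prod_filter_not s (fun c => c.1 = k) f,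
    ← Finset.prod_filter_mul_prod_filter_not (s.filter (fun c => ¬ c.1 = k))
      (fun c => c.2 = m) f, Finset.filter_filter, Finset.filter_filter, mul_assoc]

lemma rowset (ν : YoungDiagram) (k : ℕ) :
    ν.cells.filter (fun c => c.1 = k) = (range (ν.rowLen k)).image (fun j => (k, j)) := by
  ext ⟨i, j⟩
  simp only [Finset.mem_filter, Finset.mem_image, Finset.mem_range, YoungDiagram.mem_cells,
    YoungDiagram.mem_iff_lt_rowLen, Prod.mk.injEq]
  constructor
  · rintro ⟨hm, rfl⟩
    exact ⟨j, hm, rfl, rfl⟩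
  · rintro ⟨a, ha, rfl, rfl⟩
    exact ⟨ha, rfl⟩

lemma colset (μ : YoungDiagram) (k : ℕ) (hm : μ.colLen (μ.rowLen k) = k) :
    μ.cells.filter (fun c => ¬ c.1 = k ∧ c.2 = μ.rowLen k)
      = (range k).image (fun i => (i, μ.rowLen k)) := by
  ext ⟨i, j⟩
  simp only [Finset.mem_filter, Finset.mem_image, Finset.mem_range, YoungDiagram.mem_cells,
    YoungDiagram.mem_iff_lt_colLen, Prod.mk.injEq]
  constructor
  · rintro ⟨hmem, -, rfl⟩
    rw [hm] at hmem
    exact ⟨i, hmem, rfl, rfl⟩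
  · rintro ⟨a, ha, rfl, rfl⟩
    exact ⟨by rw [hm]; exact ha, by omega, rfl⟩

lemma block_step {R : Type*} [CommRing R] (g : ℕ → R) (a b : ℕ) (hab : a ≤ b) :
    (∏ j ∈ Ico a b, g j) * g b = (∏ j ∈ Ico a b, g (j + 1)) * g a := by
  rcases eq_or_lt_of_le hab with rfl | h
  · simp
  rw [Finset.prod_Ico_add' g a b 1, ← Finset.prod_Ico_succ_top hab,
    Finset.prod_eq_prod_Ico_succ_bot (by omega : a < b + 1), mul_comm]

lemma telescope {R : Type*} [CommRing R] (G : ℕ → ℕ → R) (ρ c : ℕ → ℕ) (k L : ℕ)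
    (hkL : k ≤ L) (hanti : Antitone ρ)
    (hc : ∀ t j, ρ (t + 1) ≤ j → j < ρ t → c j = t + 1)
    (hL : ρ L = 0) (hG : G (ρ k) (k + 1) = 1) :
    (∏ j ∈ range (ρ k), G j (c j)) * ∏ j ∈ Ico (k + 1) L, G (ρ j) (j + 1)
      = (∏ j ∈ range (ρ k), G (j + 1) (c j)) * ∏ t ∈ Ico (k + 1) (L + 1), G (ρ t) t := by
  have key : ∀ T, k ≤ T →
      (∏ j ∈ Ico (ρ T) (ρ k), G j (c j)) * ∏ j ∈ Ico (k + 1) T, G (ρ j) (j + 1)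
        = (∏ j ∈ Ico (ρ T) (ρ k), G (j + 1) (c j)) * ∏ t ∈ Ico (k + 1) (T + 1), G (ρ t) t := by
    intro T hT
    induction T, hT using Nat.le_induction with
    | base => simp
    | succ T hT ih =>
      have h1 : ρ (T + 1) ≤ ρ T := hanti (Nat.le_succ T)
      have h2 : ρ T ≤ ρ k := hanti hT
      have hsplitL : ∏ j ∈ Ico (k + 1) (T + 1), G (ρ j) (j + 1)
          = (∏ j ∈ Ico (k + 1) T, G (ρ j) (j + 1)) * G (ρ T) (T + 1) := by
        rcases eq_or_lt_of_le hT with rfl | h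
        · simp [hG]
        · exact Finset.prod_Ico_succ_top (by omega) _
      have hblockc : ∀ j ∈ Ico (ρ (T + 1)) (ρ T), c j = T + 1 := by
        intro j hj
        rw [Finset.mem_Ico] at hj
        exact hc T j hj.1 hj.2
      have hbL : ∏ j ∈ Ico (ρ (T + 1)) (ρ T), G j (c j)
          = ∏ j ∈ Ico (ρ (T + 1)) (ρ T), G j (T + 1) :=
        Finset.prod_congr rfl fun j hj => by rw [hblockc j hj]
      have hbR : ∏ j ∈ Ico (ρ (T + 1)) (ρ T), G (j + 1) (c j)
          = ∏ j ∈ Ico (ρ (T + 1)) (ρ T), G (j + 1) (T + 1) :=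
        Finset.prod_congr rfl fun j hj => by rw [hblockc j hj]
      have hblock := block_step (fun j => G j (T + 1)) (ρ (T + 1)) (ρ T) h1
      calc (∏ j ∈ Ico (ρ (T + 1)) (ρ k), G j (c j)) * ∏ j ∈ Ico (k + 1) (T + 1), G (ρ j) (j + 1)
          = ((∏ j ∈ Ico (ρ (T + 1)) (ρ T), G j (T + 1)) * G (ρ T) (T + 1)) *
              ((∏ j ∈ Ico (ρ T) (ρ k), G j (c j)) * ∏ j ∈ Ico (k + 1) T, G (ρ j) (j + 1)) := by
            rw [← Finset.prod_Ico_consecutive _ h1 h2, hsplitL, ← hbL]; ring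
        _ = ((∏ j ∈ Ico (ρ (T + 1)) (ρ T), G (j + 1) (T + 1)) * G (ρ (T + 1)) (T + 1)) *
              ((∏ j ∈ Ico (ρ T) (ρ k), G (j + 1) (c j)) *
                ∏ t ∈ Ico (k + 1) (T + 1), G (ρ t) t) := by
            rw [hblock, ih]
        _ = (∏ j ∈ Ico (ρ (T + 1)) (ρ k), G (j + 1) (c j)) *
              ∏ t ∈ Ico (k + 1) (T + 1 + 1), G (ρ t) t := by
            rw [← Finset.prod_Ico_consecutive _ h1 h2,
              Finset.prod_Ico_succ_top (by omega : k + 1 ≤ T + 1), ← hbR]; ring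
  have hfin := key L hkL
  rw [Finset.range_eq_Ico]
  rwa [hL] at hfin

lemma assemble {R : Type*} [CommRing R] (x y u v p q w : R) (h : x * u = y * v) :
    (x * p * w) * q * u = (y * q * w) * p * v := by
  linear_combination (p * q * w) * h

/-- Recursion for the normalization factor `C_λ` when a box is added in row `k`
(rows are 0-based: the 1-based row index is `k+1`, and `x_s x_t⁻¹ = q1^{λ_s-λ_t} q3^{s-t}`).
`μ'` is the diagram `μ + 1_{k}` and `ℓ ≡ (k+1) - μ_{k+1} - 1 (mod n)` is the color of the
added box. -/
theorem normC_recursion {R : Type*} [CommRing R] (n : ℕ) (hn : 2 ≤ n)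
    (q1 q3 : Rˣ) (μ μ' : YoungDiagram) (k : ℕ) (ℓ : ℤ)
    (hadd : μ'.cells = insert (k, μ.rowLen k) μ.cells)
    (hcol : (ℓ : ZMod n) = (((k : ℤ) + 1 - (μ.rowLen k : ℤ) - 1 : ℤ) : ZMod n)) :
    normC n q1 q3 μ' *
      (∏ j ∈ (Finset.range k).filter
          (fun (j : ℕ) => ((((j : ℤ) + 1 - (μ.rowLen j : ℤ) : ℤ) : ZMod n) = (ℓ : ZMod n))),
        (1 - ((q1 ^ ((μ.rowLen j : ℤ) - (μ.rowLen k : ℤ) - 1) *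
               q3 ^ ((j : ℤ) - (k : ℤ)) : Rˣ) : R))) *
      (∏ j ∈ (Finset.Ico (k + 1) (μ.colLen 0)).filter
          (fun (j : ℕ) => ((((j : ℤ) + 1 - (μ.rowLen j : ℤ) : ℤ) : ZMod n) = (ℓ : ZMod n))),
        (1 - ((q1 ^ ((μ.rowLen k : ℤ) - (μ.rowLen j : ℤ)) *
               q3 ^ ((k : ℤ) - (j : ℤ) - 1) : Rˣ) : R)))
    = normC n q1 q3 μ *
      (∏ j ∈ (Finset.range k).filter
          (fun (j : ℕ) => ((((j : ℤ) + 1 - (μ.rowLen j : ℤ) : ℤ) : ZMod n) = (ℓ : ZMod n) + 1)),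
        (1 - (((q1 * q3)⁻¹ * (q1 ^ ((μ.rowLen j : ℤ) - (μ.rowLen k : ℤ)) *
               q3 ^ ((j : ℤ) - (k : ℤ))) : Rˣ) : R))) *
      (∏ j ∈ (Finset.Ico (k + 1) (μ.colLen 0 + 1)).filter
          (fun (j : ℕ) => ((((j : ℤ) + 1 - (μ.rowLen j : ℤ) : ℤ) : ZMod n) = (ℓ : ZMod n) + 1)),
        (1 - ((q1 ^ ((μ.rowLen k : ℤ) - (μ.rowLen j : ℤ)) *
               q3 ^ ((k : ℤ) - (j : ℤ)) : Rˣ) : R))) := by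
  haveI : Fact (1 < n) := ⟨hn⟩
  have hm := hcolm hadd
  have hr' := hrow' hadd
  have hc' := hcol' hadd
  have hkL' := hkL hadd
  have hcol1 : (ℓ : ZMod n) + 1 = (((k : ℤ) + 1 - (μ.rowLen k : ℤ) : ℤ) : ZMod n) := by
    rw [hcol]; push_cast; ring
  have hinj : ∀ (s : Finset ℕ), Set.InjOn (fun j => ((k, j) : ℕ × ℕ)) s := by
    intro s x _ y _ hxy
    simpa using hxy
  have hinj2 : ∀ (s : Finset ℕ), Set.InjOn (fun i => ((i, μ.rowLen k) : ℕ × ℕ)) s := by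
    intro s x _ y _ hxy
    simpa using hxy
  -- row part of μ
  have hrowμ : ∏ c ∈ μ.cells.filter (fun c => c.1 = k), tfun n q1 q3 μ c
      = ∏ j ∈ range (μ.rowLen k), Gfun n q1 q3 (μ.rowLen k) k (j + 1) (μ.colLen j) := by
    rw [rowset, Finset.prod_image (hinj _)]
    refine Finset.prod_congr rfl fun j hj => ?_
    simp only [tfun, Gfun]
    refine ifcong0 n _ _ ?_ _ _ ?_
    · simp only [hookZ, armZ, legZ]
      push_cast
      ring
    · refine valcong q1 q3 _ _ _ _ ?_ ?_
      · simp only [armZ]; push_cast; ring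
      · simp only [legZ]; push_cast; ring
  -- row part of μ'
  have hrowμ' : ∏ c ∈ μ'.cells.filter (fun c => c.1 = k), tfun n q1 q3 μ' c
      = ∏ j ∈ range (μ.rowLen k), Gfun n q1 q3 (μ.rowLen k) k j (μ.colLen j) := by
    rw [rowset, Finset.prod_image (hinj _)]
    have hrk : μ'.rowLen k = μ.rowLen k + 1 := by rw [hr' k, if_pos rfl]
    have hcm : μ'.colLen (μ.rowLen k) = k + 1 := by rw [hc' _, if_pos rfl]
    rw [hrk, Finset.prod_range_succ]
    have hlast : tfun n q1 q3 μ' (k, μ.rowLen k) = 1 := by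
      simp only [tfun]
      rw [if_neg]
      have h1 : hookZ μ' (k, μ.rowLen k) = 1 := by
        simp only [hookZ, armZ, legZ, hrk, hcm]
        push_cast
        ring
      rw [h1]
      simp
    rw [hlast, mul_one]
    refine Finset.prod_congr rfl fun j hj => ?_
    rw [Finset.mem_range] at hj
    have hcj : μ'.colLen j = μ.colLen j := by rw [hc' j, if_neg (by omega)]
    simp only [tfun, Gfun]
    refine ifcong0 n _ _ ?_ _ _ ?_
    · simp only [hookZ, armZ, legZ, hrk, hcj]
      push_cast
      ring
    · refine valcong q1 q3 _ _ _ _ ?_ ?_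
      · simp only [armZ, hrk]; push_cast; ring
      · simp only [legZ, hcj]; push_cast; ring
  -- column part of μ
  have hcolμ : ∏ c ∈ μ.cells.filter (fun c => ¬ c.1 = k ∧ c.2 = μ.rowLen k), tfun n q1 q3 μ c
      = ∏ j ∈ (Finset.range k).filter
          (fun (j : ℕ) => ((((j : ℤ) + 1 - (μ.rowLen j : ℤ) : ℤ) : ZMod n) = (ℓ : ZMod n))),
        (1 - ((q1 ^ ((μ.rowLen j : ℤ) - (μ.rowLen k : ℤ) - 1) *
               q3 ^ ((j : ℤ) - (k : ℤ)) : Rˣ) : R)) := by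
    rw [colset μ k hm, Finset.prod_image (hinj2 _), Finset.prod_filter]
    refine Finset.prod_congr rfl fun j hj => ?_
    simp only [tfun]
    refine (ifshiftYX n _ _ _ _ hcol ?_ _ _ ?_).symm
    · simp only [hookZ, armZ, legZ, hm]
      push_cast
      ring
    · refine valcong q1 q3 _ _ _ _ ?_ ?_
      · simp only [armZ]; all_goals (push_cast; ring)
      · simp only [legZ, hm]; all_goals (push_cast; ring)
  -- column part of μ'
  have hcolμ' : ∏ c ∈ μ'.cells.filter (fun c => ¬ c.1 = k ∧ c.2 = μ.rowLen k),
        tfun n q1 q3 μ' c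
      = ∏ j ∈ (Finset.range k).filter
          (fun (j : ℕ) => ((((j : ℤ) + 1 - (μ.rowLen j : ℤ) : ℤ) : ZMod n) = (ℓ : ZMod n) + 1)),
        (1 - (((q1 * q3)⁻¹ * (q1 ^ ((μ.rowLen j : ℤ) - (μ.rowLen k : ℤ)) *
               q3 ^ ((j : ℤ) - (k : ℤ))) : Rˣ) : R)) := by
    have hset : μ'.cells.filter (fun c => ¬ c.1 = k ∧ c.2 = μ.rowLen k)
        = μ.cells.filter (fun c => ¬ c.1 = k ∧ c.2 = μ.rowLen k) := by
      rw [hadd, Finset.filter_insert, if_neg (by simp)]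
    rw [hset, colset μ k hm, Finset.prod_image (hinj2 _), Finset.prod_filter]
    refine Finset.prod_congr rfl fun j hj => ?_
    rw [Finset.mem_range] at hj
    have e1 : μ'.rowLen j = μ.rowLen j := by rw [hr' j, if_neg (by omega)]
    have e2 : μ'.colLen (μ.rowLen k) = k + 1 := by rw [hc' _, if_pos rfl]
    simp only [tfun]
    refine (ifshiftYX n _ _ _ _ hcol1 ?_ _ _ ?_).symm
    · simp only [hookZ, armZ, legZ, e1, e2]
      push_cast
      ring
    · refine (valcong' q1 q3 _ _ _ _ ?_ ?_).symm
      · simp only [armZ, e1]; all_goals (push_cast; ring)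
      · simp only [legZ, e2]; all_goals (push_cast; ring)
  -- rest part
  have hrest : ∏ c ∈ μ'.cells.filter (fun c => ¬ c.1 = k ∧ ¬ c.2 = μ.rowLen k),
        tfun n q1 q3 μ' c
      = ∏ c ∈ μ.cells.filter (fun c => ¬ c.1 = k ∧ ¬ c.2 = μ.rowLen k), tfun n q1 q3 μ c := by
    rw [hadd, Finset.filter_insert, if_neg (by simp)]
    refine Finset.prod_congr rfl fun c hcmem => ?_
    rw [Finset.mem_filter] at hcmem
    obtain ⟨-, h1, h2⟩ := hcmem
    have e1 : μ'.rowLen c.1 = μ.rowLen c.1 := by rw [hr' c.1, if_neg h1]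
    have e2 : μ'.colLen c.2 = μ.colLen c.2 := by rw [hc' c.2, if_neg h2]
    simp only [tfun, hookZ, armZ, legZ, e1, e2]
    rfl
  -- B and B'
  have hB : ∏ j ∈ (Finset.Ico (k + 1) (μ.colLen 0)).filter
          (fun (j : ℕ) => ((((j : ℤ) + 1 - (μ.rowLen j : ℤ) : ℤ) : ZMod n) = (ℓ : ZMod n))),
        (1 - ((q1 ^ ((μ.rowLen k : ℤ) - (μ.rowLen j : ℤ)) *
               q3 ^ ((k : ℤ) - (j : ℤ) - 1) : Rˣ) : R))
      = ∏ j ∈ Ico (k + 1) (μ.colLen 0),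
          Gfun n q1 q3 (μ.rowLen k) k (μ.rowLen j) (j + 1) := by
    rw [Finset.prod_filter]
    refine Finset.prod_congr rfl fun j hj => ?_
    simp only [Gfun]
    refine ifshiftXY n _ _ _ _ hcol ?_ _ _ ?_
    · push_cast; ring
    · refine valcong q1 q3 _ _ _ _ ?_ ?_ <;> (push_cast; ring)
  have hB' : ∏ j ∈ (Finset.Ico (k + 1) (μ.colLen 0 + 1)).filter
          (fun (j : ℕ) => ((((j : ℤ) + 1 - (μ.rowLen j : ℤ) : ℤ) : ZMod n) = (ℓ : ZMod n) + 1)),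
        (1 - ((q1 ^ ((μ.rowLen k : ℤ) - (μ.rowLen j : ℤ)) *
               q3 ^ ((k : ℤ) - (j : ℤ)) : Rˣ) : R))
      = ∏ t ∈ Ico (k + 1) (μ.colLen 0 + 1), Gfun n q1 q3 (μ.rowLen k) k (μ.rowLen t) t := by
    rw [Finset.prod_filter]
    refine Finset.prod_congr rfl fun j hj => ?_
    simp only [Gfun]
    refine ifshiftXY n _ _ _ _ hcol1 ?_ _ _ ?_
    · push_cast; ring
    · refine valcong q1 q3 _ _ _ _ ?_ ?_ <;> (push_cast; ring)
  have hG1 : Gfun (R := R) n q1 q3 (μ.rowLen k) k (μ.rowLen k) (k + 1) = 1 := by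
    simp only [Gfun]
    rw [if_neg]
    have h1 : ((μ.rowLen k : ℤ) - (μ.rowLen k : ℤ) + ((k : ℕ) + 1 : ℕ) - (k : ℤ) : ℤ) = 1 := by
      push_cast; ring
    rw [h1]
    simp
  have htel := telescope (Gfun n q1 q3 (μ.rowLen k) k) μ.rowLen μ.colLen k (μ.colLen 0)
    hkL' (fun a b hab => μ.rowLen_anti a b hab) (hcblock μ) (hL0 μ) hG1
  rw [normC_eq n q1 q3 μ', normC_eq n q1 q3 μ,
    split3 μ'.cells (tfun n q1 q3 μ') k (μ.rowLen k),
    split3 μ.cells (tfun n q1 q3 μ) k (μ.rowLen k),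
    hrowμ', hrowμ, hcolμ', hcolμ, hrest, hB, hB']
  exact assemble _ _ _ _ _ _ _ htel
end

section
/- Let n ≥ 2 and let q1, q3 be invertible elements of a commutative ring; set q2 := (q1 q3)^{−1}. Let λ be a Young diagram, let k be such that λ + 1_k is a Young diagram, and let ℓ be a residue mod n with ℓ ≡ k − λ_k − 1 (mod n). Then, with x_s := q1^{λ_s−1} q3^{s−1} computed from λ, C'_{λ+1_k}(q1,q3) · ∏_{1≤j≤k−1, j−λ_j ≡ ℓ (mod n)} (1 − q3 x_j x_k^{−1}) · ∏_{k+1≤j≤ℓ(λ), j−λ_j ≡ ℓ (mod n)} (1 − q1 x_k x_j^{−1}) = C'_λ(q1,q3) · ∏_{1≤j≤k−1, j−λ_j ≡ ℓ+1 (mod n)} (1 − x_j x_k^{−1}) · ∏_{k+1≤j≤ℓ(λ)+1, j−λ_j ≡ ℓ+1 (mod n)} (1 − q2^{−1} x_k x_j^{−1}). -/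
open Finset

/-- The dual normalization factor
`C'_λ(q1,q3) = ∏_{s ∈ λ, h_λ(s) ≡ 0 (mod n)} (1 - q1^{a_λ(s)+1} q3^{-ℓ_λ(s)})`. -/
def normC' {R : Type*} [CommRing R] (n : ℕ) (q1 q3 : Rˣ) (μ : YoungDiagram) : R :=
  ∏ c ∈ μ.cells.filter (fun c => ((hookZ μ c : ZMod n) = 0)),
    (1 - ((q1 ^ (armZ μ c + 1) * q3 ^ (-legZ μ c) : Rˣ) : R))

private lemma mhelper {α : Type*} (g : ℕ → α) (d : ℕ) :
    (Multiset.range d).map (fun m => g (m+1)) + {g (d+1)}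
      = {g 1} + (Multiset.range d).map (fun m => g (m+2)) := by
  induction d with
  | zero => simp
  | succ d ih =>
    rw [Multiset.range_succ, Multiset.map_cons, Multiset.map_cons, Multiset.cons_add,
      Multiset.add_cons, ← Multiset.singleton_add, ← Multiset.singleton_add]
    calc {g (d + 1)} + (Multiset.map (fun m => g (m + 1)) (Multiset.range d) + {g (d + 1 + 1)})
        = (Multiset.map (fun m => g (m + 1)) (Multiset.range d) + {g (d + 1)}) + {g (d+1+1)} := by
          abel
      _ = ({g 1} + Multiset.map (fun m => g (m + 2)) (Multiset.range d)) + {g (d+1+1)} := by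
          rw [ih]
      _ = _ := by abel

def Wc (c N : ℕ) (σ : ℕ → ℕ) (m : ℕ) : ℕ :=
  ((Finset.range N).filter (fun t => c ≤ σ t + m)).card

lemma Wc_eq_zero {c N : ℕ} {σ : ℕ → ℕ} {m : ℕ} (hσ : ∀ t, σ t ≤ σ 0)
    (h : σ 0 + m < c) : Wc c N σ m = 0 := by
  rw [Wc, Finset.card_eq_zero, Finset.filter_eq_empty_iff]
  intro t _
  have := hσ t
  omega

lemma range_succ_eq (N : ℕ) :
    Finset.range (N + 1) = insert 0 ((Finset.range N).image (· + 1)) := by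
  ext x
  simp only [Finset.mem_range, Finset.mem_insert, Finset.mem_image]
  constructor
  · intro h
    rcases Nat.eq_zero_or_pos x with h0 | h0
    · exact Or.inl h0
    · exact Or.inr ⟨x - 1, by omega, by omega⟩
  · rintro (rfl | ⟨y, hy, rfl⟩) <;> omega

lemma Wc_succ {c N : ℕ} {σ : ℕ → ℕ} {m : ℕ} (h : c ≤ σ 0 + m) :
    Wc c (N + 1) σ m = Wc c N (fun t => σ (t + 1)) m + 1 := by
  rw [Wc, range_succ_eq, Finset.filter_insert, if_pos h]
  rw [Finset.card_insert_of_notMem (by simp)]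
  have : ((Finset.range N).image (· + 1)).filter (fun t => c ≤ σ t + m)
      = ((Finset.range N).filter (fun t => c ≤ σ (t + 1) + m)).image (· + 1) := by
    rw [Finset.filter_image]
  rw [this, Finset.card_image_of_injective _ (fun a b => by omega)]
  rfl

lemma mrange_one : Multiset.range 1 = ({0} : Multiset ℕ) := by
  rw [Multiset.range_succ, Multiset.range_zero, Multiset.cons_zero]

lemma mcore (c : ℕ) : ∀ (N : ℕ) (σ : ℕ → ℕ), (∀ s t, s ≤ t → σ t ≤ σ s) → σ 0 ≤ c →
    σ N = 0 → (∀ t, t < N → 1 ≤ σ t) →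
    (Multiset.range c).map (fun (m:ℕ) => (((m:ℤ)+1, (Wc c N σ m : ℤ)) : ℤ × ℤ))
      + (Multiset.range (N+1)).map (fun (t:ℕ) => ((1+(c:ℤ)-(σ t : ℤ), (t : ℤ)) : ℤ × ℤ))
    = (Multiset.range c).map (fun (m:ℕ) => (((m:ℤ)+2, (Wc c N σ m : ℤ)) : ℤ × ℤ))
      + (Multiset.range N).map (fun (t:ℕ) => ((1+(c:ℤ)-(σ t : ℤ), (t:ℤ)+1) : ℤ × ℤ))
      + {((1:ℤ), (0:ℤ))} := by
  intro N
  induction N with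
  | zero =>
    intro σ hmono hle hN hpos
    have hW : ∀ m : ℕ, Wc c 0 σ m = 0 := fun m => by simp [Wc]
    have H := mhelper (fun x : ℕ => (((x:ℤ), (0:ℤ)) : ℤ × ℤ)) c
    push_cast at H
    simp only [hW, hN, Nat.cast_zero, Multiset.range_zero, Multiset.map_zero, add_zero,
      Multiset.range_succ, Multiset.map_cons, Multiset.cons_zero, Multiset.map_singleton]
    try simp only [hN, Nat.cast_zero]
    rw [show ((1:ℤ)+(c:ℤ)-0) = (c:ℤ)+1 by ring]
    rw [H]
    abel
  | succ N IH =>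
    intro σ hmono hle hN hpos
    set τ : ℕ → ℕ := fun t => σ (t + 1) with hτdef
    have hτmono : ∀ s t, s ≤ t → τ t ≤ τ s := fun s t h => hmono _ _ (by omega)
    have hτ0 : ∀ t, τ t ≤ σ 0 := fun t => hmono _ _ (by omega)
    have hσ0 : ∀ t, σ t ≤ σ 0 := fun t => hmono _ _ (by omega)
    have hττ0 : ∀ t, τ t ≤ τ 0 := fun t => hτmono 0 t (Nat.zero_le _)
    have hτle : τ 0 ≤ c := le_trans (hτ0 0) hle
    have IH' := IH τ hτmono hτle hN (fun t ht => hpos _ (by omega))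
    have IH2 := congrArg (Multiset.map (fun p : ℤ × ℤ => ((p.1, p.2 + 1) : ℤ × ℤ))) IH'
    simp only [Multiset.map_add, Multiset.map_map, Function.comp, Multiset.map_singleton] at IH2
    set d : ℕ := c - σ 0 with hd
    have hc : c = d + σ 0 := by omega
    have hsplit : (Multiset.range c) = Multiset.range d + (Multiset.range (σ 0)).map (d + ·) := by
      conv_lhs => rw [hc]
      exact Multiset.range_add d (σ 0)
    set P1 : Multiset (ℤ × ℤ) := (Multiset.range d).map (fun m : ℕ => (((m:ℤ)+1, (0:ℤ)) : ℤ×ℤ)) with hP1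
    set P2 : Multiset (ℤ × ℤ) := (Multiset.range (σ 0)).map (fun x : ℕ => ((((d+x:ℕ):ℤ)+1, (Wc c N τ (d+x) : ℤ)+1) : ℤ×ℤ)) with hP2
    set Q1 : Multiset (ℤ × ℤ) := (Multiset.range d).map (fun m : ℕ => (((m:ℤ)+2, (0:ℤ)) : ℤ×ℤ)) with hQ1
    set Q2 : Multiset (ℤ × ℤ) := (Multiset.range (σ 0)).map (fun x : ℕ => ((((d+x:ℕ):ℤ)+2, (Wc c N τ (d+x) : ℤ)+1) : ℤ×ℤ)) with hQ2
    set C1 : Multiset (ℤ × ℤ) := (Multiset.range d).map (fun m : ℕ => (((m:ℤ)+1, (1:ℤ)) : ℤ×ℤ)) with hC1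
    set D1 : Multiset (ℤ × ℤ) := (Multiset.range d).map (fun m : ℕ => (((m:ℤ)+2, (1:ℤ)) : ℤ×ℤ)) with hD1
    set T1 : Multiset (ℤ × ℤ) := (Multiset.range (N+1)).map (fun t : ℕ => ((1+(c:ℤ)-(τ t:ℤ), (t:ℤ)+1) : ℤ×ℤ)) with hT1
    set T2 : Multiset (ℤ × ℤ) := (Multiset.range N).map (fun t : ℕ => ((1+(c:ℤ)-(τ t:ℤ), (t:ℤ)+2) : ℤ×ℤ)) with hT2
    have hx0 : (1:ℤ)+(c:ℤ)-((σ 0 : ℕ):ℤ) = (d:ℤ)+1 := by push_cast; omega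
    have hB1 : (Multiset.range c).map (fun (m:ℕ) => (((m:ℤ)+1, (Wc c (N+1) σ m : ℤ)) : ℤ × ℤ))
        = P1 + P2 := by
      rw [hsplit, Multiset.map_add, Multiset.map_map]
      congr 1
      · refine Multiset.map_congr rfl (fun m hm => ?_)
        rw [Multiset.mem_range] at hm
        rw [Wc_eq_zero hσ0 (by omega)]
        norm_num
      · refine Multiset.map_congr rfl (fun x hx => ?_)
        simp only [Function.comp_apply]
        rw [Wc_succ (by omega), ← hτdef]
        push_cast
        ring_nf
    have hA1 : (Multiset.range c).map (fun (m:ℕ) => (((m:ℤ)+2, (Wc c (N+1) σ m : ℤ)) : ℤ × ℤ))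
        = Q1 + Q2 := by
      rw [hsplit, Multiset.map_add, Multiset.map_map]
      congr 1
      · refine Multiset.map_congr rfl (fun m hm => ?_)
        rw [Multiset.mem_range] at hm
        rw [Wc_eq_zero hσ0 (by omega)]
        norm_num
      · refine Multiset.map_congr rfl (fun x hx => ?_)
        simp only [Function.comp_apply]
        rw [Wc_succ (by omega), ← hτdef]
        push_cast
        ring_nf
    have hB2 : (Multiset.range (N+1+1)).map (fun (t:ℕ) => ((1+(c:ℤ)-(σ t : ℤ), (t : ℤ)) : ℤ × ℤ))
        = {((d:ℤ)+1, (0:ℤ))} + T1 := by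
      rw [show N+1+1 = 1+(N+1) by omega, Multiset.range_add, Multiset.map_add,
        Multiset.map_map, mrange_one, Multiset.map_singleton]
      congr 1
      · rw [hx0]; norm_num
      · refine Multiset.map_congr rfl (fun t ht => ?_)
        simp only [Function.comp_apply, hτdef]
        rw [Nat.add_comm 1 t]
        push_cast
        ring_nf
    have hA2 : (Multiset.range (N+1)).map (fun (t:ℕ) => ((1+(c:ℤ)-(σ t : ℤ), (t:ℤ)+1) : ℤ × ℤ))
        = {((d:ℤ)+1, (1:ℤ))} + T2 := by
      rw [show N+1 = 1+N by omega, Multiset.range_add, Multiset.map_add,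
        Multiset.map_map, mrange_one, Multiset.map_singleton]
      congr 1
      · rw [hx0]; norm_num
      · refine Multiset.map_congr rfl (fun t ht => ?_)
        simp only [Function.comp_apply, hτdef]
        rw [Nat.add_comm 1 t]
        push_cast
        ring_nf
    have hCP : (Multiset.range c).map (fun (m:ℕ) => (((m:ℤ)+1, (Wc c N τ m : ℤ)+1) : ℤ × ℤ))
        = C1 + P2 := by
      rw [hsplit, Multiset.map_add, Multiset.map_map]
      congr 1
      · refine Multiset.map_congr rfl (fun m hm => ?_)
        rw [Multiset.mem_range] at hm
        rw [Wc_eq_zero hττ0 (by have := hτ0 0; omega)]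
        norm_num
    have hDQ : (Multiset.range c).map (fun (m:ℕ) => (((m:ℤ)+2, (Wc c N τ m : ℤ)+1) : ℤ × ℤ))
        = D1 + Q2 := by
      rw [hsplit, Multiset.map_add, Multiset.map_map]
      congr 1
      refine Multiset.map_congr rfl (fun m hm => ?_)
      rw [Multiset.mem_range] at hm
      rw [Wc_eq_zero hττ0 (by have := hτ0 0; omega)]
      norm_num
    have hT2' : (Multiset.range N).map (fun x : ℕ => ((1+(c:ℤ)-(τ x:ℤ), (x:ℤ)+1+1) : ℤ×ℤ)) = T2 :=
      Multiset.map_congr rfl (fun x hx => by norm_num; ring)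
    rw [hCP, hDQ, hT2', show (((1:ℤ),(0:ℤ)+1) : ℤ×ℤ) = (((1:ℤ),(1:ℤ)) : ℤ×ℤ) by norm_num] at IH2
    have mh0 := mhelper (fun x : ℕ => (((x:ℤ), (0:ℤ)) : ℤ×ℤ)) d
    have mh1 := mhelper (fun x : ℕ => (((x:ℤ), (1:ℤ)) : ℤ×ℤ)) d
    push_cast at mh0 mh1
    have key : C1 + (P2 + T1) = C1 + ({((d:ℤ)+1,(1:ℤ))} + (Q2 + T2)) := by
      calc C1 + (P2 + T1) = C1 + P2 + T1 := by abel
        _ = D1 + Q2 + T2 + {((1:ℤ),(1:ℤ))} := IH2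
        _ = ({((1:ℤ),(1:ℤ))} + D1) + (Q2 + T2) := by abel
        _ = (C1 + {((d:ℤ)+1,(1:ℤ))}) + (Q2 + T2) := by rw [← mh1]
        _ = _ := by abel
    have key' : P2 + T1 = {((d:ℤ)+1,(1:ℤ))} + (Q2 + T2) := add_left_cancel key
    rw [hB1, hB2, hA1, hA2]
    calc P1 + P2 + ({((d:ℤ)+1,(0:ℤ))} + T1)
        = (P1 + {((d:ℤ)+1,(0:ℤ))}) + (P2 + T1) := by abel
      _ = ({((1:ℤ),(0:ℤ))} + Q1) + ({((d:ℤ)+1,(1:ℤ))} + (Q2 + T2)) := by rw [mh0, key']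
      _ = Q1 + Q2 + ({((d:ℤ)+1,(1:ℤ))} + T2) + {((1:ℤ),(0:ℤ))} := by abel


lemma prod_pairs {R : Type*} [CommRing R] (n : ℕ) (q1 q3 : Rˣ) (s : Finset ℕ) (e : ℕ → ℤ × ℤ) :
    (∏ j ∈ s, (if (((e j).1 + (e j).2 : ℤ) : ZMod n) = 0 then
        (1 - ((q1 ^ (e j).1 * q3 ^ (-(e j).2) : Rˣ) : R)) else 1))
      = (((s.val.map e).filter (fun p : ℤ×ℤ => (((p.1+p.2 : ℤ) : ZMod n) = 0))).map
          (fun p : ℤ×ℤ => (1 - ((q1 ^ p.1 * q3 ^ (-p.2) : Rˣ) : R)))).prod := by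
  rw [Multiset.filter_map, Multiset.map_map]
  rw [← Finset.prod_filter]
  rw [Finset.prod_eq_multiset_prod]
  rfl

lemma nat_eq_of_lt_iff {a b : ℕ} (h : ∀ j, j < a ↔ j < b) : a = b := by
  rcases Nat.lt_trichotomy a b with hl | he | hg
  · have := (h a).mpr hl; omega
  · exact he
  · have := (h b).mp hg; omega

lemma split3_s2 {R : Type*} [CommRing R] (μ : YoungDiagram) (k rk : ℕ)
    (hne : (k, rk) ∉ μ) (hcol : μ.colLen rk = k) (G : ℕ×ℕ → R) :
    ∏ c ∈ μ.cells, G c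
      = (∏ j ∈ Finset.range (μ.rowLen k), G (k,j)) * ((∏ i ∈ Finset.range k, G (i,rk))
        * ∏ c ∈ μ.cells.filter (fun c => ¬ c.1 = k ∧ ¬ c.2 = rk), G c) := by
  classical
  have h1 : μ.cells.filter (fun c => c.1 = k) = {k} ×ˢ Finset.range (μ.rowLen k) := by
    rw [show μ.cells.filter (fun c => c.1 = k) = μ.row k from rfl, YoungDiagram.row_eq_prod]
  have h2 : (μ.cells.filter (fun c => ¬ c.1 = k)).filter (fun c => c.2 = rk)
      = Finset.range k ×ˢ {rk} := by
    rw [Finset.filter_filter]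
    have : μ.cells.filter (fun c => ¬ c.1 = k ∧ c.2 = rk) = μ.cells.filter (fun c => c.2 = rk) := by
      apply Finset.filter_congr
      intro c hc
      rw [YoungDiagram.mem_cells] at hc
      constructor
      · tauto
      · intro h2
        refine ⟨fun h1 => hne ?_, h2⟩
        have : c = (k, rk) := Prod.ext h1 h2
        rwa [this] at hc
    rw [this, show μ.cells.filter (fun c => c.2 = rk) = μ.col rk from rfl,
      YoungDiagram.col_eq_prod, hcol]
  have h3 : (μ.cells.filter (fun c => ¬ c.1 = k)).filter (fun c => ¬ c.2 = rk)
      = μ.cells.filter (fun c => ¬ c.1 = k ∧ ¬ c.2 = rk) := by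
    rw [Finset.filter_filter]
  rw [← Finset.prod_filter_mul_prod_filter_not μ.cells (fun c => c.1 = k) G,
    ← Finset.prod_filter_mul_prod_filter_not (μ.cells.filter (fun c => ¬ c.1 = k))
      (fun c => c.2 = rk) G,
    h1, h2, h3, Finset.prod_product, Finset.prod_product, Finset.prod_singleton]
  simp only [Finset.prod_singleton]


def Gfac {R : Type*} [CommRing R] (n : ℕ) (q1 q3 : Rˣ) (ν : YoungDiagram) (c : ℕ × ℕ) : R :=
  if ((hookZ ν c : ZMod n) = 0) then
    (1 - ((q1 ^ (armZ ν c + 1) * q3 ^ (-legZ ν c) : Rˣ) : R)) else 1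

lemma normC'_eq_prod {R : Type*} [CommRing R] (n : ℕ) (q1 q3 : Rˣ) (ν : YoungDiagram) :
    normC' n q1 q3 ν = ∏ c ∈ ν.cells, Gfac n q1 q3 ν c := by
  rw [normC', Finset.prod_filter]
  rfl

lemma prod_pairs' {R : Type*} [CommRing R] (n : ℕ) (q1 q3 : Rˣ) (s : Finset ℕ) (a b : ℕ → ℤ) :
    (∏ j ∈ s, (if ((a j + b j : ℤ) : ZMod n) = 0 then
        (1 - ((q1 ^ (a j) * q3 ^ (-(b j)) : Rˣ) : R)) else 1))
      = (((s.val.map (fun j => ((a j, b j) : ℤ × ℤ))).filter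
            (fun p : ℤ×ℤ => (((p.1+p.2 : ℤ) : ZMod n) = 0))).map
          (fun p : ℤ×ℤ => (1 - ((q1 ^ p.1 * q3 ^ (-p.2) : Rˣ) : R)))).prod := by
  have h := prod_pairs n q1 q3 s (fun j => ((a j, b j) : ℤ × ℤ))
  simpa using h

/-- Recursion for the dual normalization factor `C'_λ` when a box is added in row `k`
(rows are 0-based: the 1-based row index is `k+1`, and `x_s x_t⁻¹ = q1^{λ_s-λ_t} q3^{s-t}`,
`q2 = (q1 q3)⁻¹`). `μ'` is the diagram `μ + 1_{k}` and `ℓ ≡ (k+1) - μ_{k+1} - 1 (mod n)` is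
the color of the added box. -/
theorem normC'_recursion {R : Type*} [CommRing R] (n : ℕ) (hn : 2 ≤ n)
    (q1 q3 : Rˣ) (μ μ' : YoungDiagram) (k : ℕ) (ℓ : ℤ)
    (hadd : μ'.cells = insert (k, μ.rowLen k) μ.cells)
    (hcol : (ℓ : ZMod n) = (((k : ℤ) + 1 - (μ.rowLen k : ℤ) - 1 : ℤ) : ZMod n)) :
    normC' n q1 q3 μ' *
      (∏ j ∈ (Finset.range k).filter
          (fun (j : ℕ) => ((((j : ℤ) + 1 - (μ.rowLen j : ℤ) : ℤ) : ZMod n) = (ℓ : ZMod n))),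
        (1 - ((q3 * (q1 ^ ((μ.rowLen j : ℤ) - (μ.rowLen k : ℤ)) *
               q3 ^ ((j : ℤ) - (k : ℤ))) : Rˣ) : R))) *
      (∏ j ∈ (Finset.Ico (k + 1) (μ.colLen 0)).filter
          (fun (j : ℕ) => ((((j : ℤ) + 1 - (μ.rowLen j : ℤ) : ℤ) : ZMod n) = (ℓ : ZMod n))),
        (1 - ((q1 * (q1 ^ ((μ.rowLen k : ℤ) - (μ.rowLen j : ℤ)) *
               q3 ^ ((k : ℤ) - (j : ℤ))) : Rˣ) : R)))
    = normC' n q1 q3 μ *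
      (∏ j ∈ (Finset.range k).filter
          (fun (j : ℕ) => ((((j : ℤ) + 1 - (μ.rowLen j : ℤ) : ℤ) : ZMod n) = (ℓ : ZMod n) + 1)),
        (1 - ((q1 ^ ((μ.rowLen j : ℤ) - (μ.rowLen k : ℤ)) *
               q3 ^ ((j : ℤ) - (k : ℤ)) : Rˣ) : R))) *
      (∏ j ∈ (Finset.Ico (k + 1) (μ.colLen 0 + 1)).filter
          (fun (j : ℕ) => ((((j : ℤ) + 1 - (μ.rowLen j : ℤ) : ℤ) : ZMod n) = (ℓ : ZMod n) + 1)),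
        (1 - (((q1 * q3) * (q1 ^ ((μ.rowLen k : ℤ) - (μ.rowLen j : ℤ)) *
               q3 ^ ((k : ℤ) - (j : ℤ))) : Rˣ) : R))) := by
  classical
  haveI : Fact (1 < n) := ⟨hn⟩
  set rk := μ.rowLen k with hrk
  set L := μ.colLen 0 with hL
  have hmem : ∀ c : ℕ×ℕ, c ∈ μ' ↔ c = (k, rk) ∨ c ∈ μ := fun c => by
    rw [← YoungDiagram.mem_cells, hadd, Finset.mem_insert, YoungDiagram.mem_cells]
  have hF0 : (k, rk) ∉ μ := by
    rw [YoungDiagram.mem_iff_lt_rowLen]; omega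
  have hF1 : μ'.rowLen k = rk + 1 := by
    apply nat_eq_of_lt_iff; intro j
    rw [← YoungDiagram.mem_iff_lt_rowLen, hmem]
    constructor
    · rintro (h | h)
      · have := congrArg Prod.snd h; simp at this; omega
      · rw [YoungDiagram.mem_iff_lt_rowLen] at h; omega
    · intro hj
      rcases Nat.lt_or_ge j rk with h | h
      · exact Or.inr (YoungDiagram.mem_iff_lt_rowLen.mpr h)
      · left; have : j = rk := by omega
        simp [this]
  have hF2 : ∀ i, ¬ i = k → μ'.rowLen i = μ.rowLen i := by
    intro i hi; apply nat_eq_of_lt_iff; intro j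
    rw [← YoungDiagram.mem_iff_lt_rowLen, hmem, ← YoungDiagram.mem_iff_lt_rowLen]
    constructor
    · rintro (h | h)
      · exact absurd (congrArg Prod.fst h) hi
      · exact h
    · exact Or.inr
  have hkmem' : (k, rk) ∈ μ' := (hmem _).mpr (Or.inl rfl)
  have hF3 : μ.colLen rk = k := by
    apply nat_eq_of_lt_iff; intro i
    rw [← YoungDiagram.mem_iff_lt_colLen]
    constructor
    · intro h
      by_contra hik
      exact hF0 (μ.up_left_mem (by omega) le_rfl h)
    · intro hik
      have h' : (i, rk) ∈ μ' := μ'.up_left_mem (by omega) le_rfl hkmem'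
      rcases (hmem _).mp h' with h | h
      · have := congrArg Prod.fst h; simp at this; omega
      · exact h
  have hF4 : μ'.colLen rk = k + 1 := by
    apply nat_eq_of_lt_iff; intro i
    rw [← YoungDiagram.mem_iff_lt_colLen]
    constructor
    · intro h
      rcases (hmem _).mp h with h | h
      · have := congrArg Prod.fst h; simp at this; omega
      · rw [YoungDiagram.mem_iff_lt_colLen, hF3] at h; omega
    · intro hi
      rcases Nat.lt_or_ge i k with h | h
      · exact μ'.up_left_mem (by omega) le_rfl hkmem'
      · have hik : i = k := by omega
        rw [hik]; exact hkmem'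
  have hF5 : ∀ j, ¬ j = rk → μ'.colLen j = μ.colLen j := by
    intro j hj; apply nat_eq_of_lt_iff; intro i
    rw [← YoungDiagram.mem_iff_lt_colLen, hmem, ← YoungDiagram.mem_iff_lt_colLen]
    constructor
    · rintro (h | h)
      · exact absurd (congrArg Prod.snd h) hj
      · exact h
    · exact Or.inr
  have hGnew : Gfac n q1 q3 μ' (k, rk) = 1 := by
    rw [Gfac, if_neg]
    have h1 : hookZ μ' (k, rk) = 1 := by
      simp only [hookZ, armZ, legZ, hF1, hF4]
      push_cast
      ring
    rw [h1]
    intro h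
    norm_num at h
  have hRest : ∏ c ∈ μ.cells.filter (fun c => ¬ c.1 = k ∧ ¬ c.2 = rk), Gfac n q1 q3 μ' c
      = ∏ c ∈ μ.cells.filter (fun c => ¬ c.1 = k ∧ ¬ c.2 = rk), Gfac n q1 q3 μ c := by
    refine Finset.prod_congr rfl (fun c hc => ?_)
    rw [Finset.mem_filter] at hc
    obtain ⟨hcmem, hc1, hc2⟩ := hc
    rw [Gfac, Gfac, hookZ, hookZ, armZ, armZ, legZ, legZ, hF2 c.1 hc1, hF5 c.2 hc2]
  have hE1 : normC' n q1 q3 μ' = (∏ j ∈ Finset.range rk, Gfac n q1 q3 μ' (k,j)) *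
      ((∏ i ∈ Finset.range k, Gfac n q1 q3 μ' (i,rk)) *
        ∏ c ∈ μ.cells.filter (fun c => ¬ c.1 = k ∧ ¬ c.2 = rk), Gfac n q1 q3 μ c) := by
    rw [normC'_eq_prod, hadd, Finset.prod_insert (by rw [YoungDiagram.mem_cells]; exact hF0),
      hGnew, one_mul, ← hRest]
    exact split3_s2 μ k rk hF0 hF3 (Gfac n q1 q3 μ')
  have hE2 : normC' n q1 q3 μ = (∏ j ∈ Finset.range rk, Gfac n q1 q3 μ (k,j)) *
      ((∏ i ∈ Finset.range k, Gfac n q1 q3 μ (i,rk)) *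
        ∏ c ∈ μ.cells.filter (fun c => ¬ c.1 = k ∧ ¬ c.2 = rk), Gfac n q1 q3 μ c) := by
    rw [normC'_eq_prod]
    exact split3_s2 μ k rk hF0 hF3 (Gfac n q1 q3 μ)
  have hℓ : (ℓ : ZMod n) = ((k : ℤ) : ZMod n) - ((rk : ℤ) : ZMod n) := by
    rw [hcol]; push_cast; ring
  have hcolL : (∏ i ∈ Finset.range k, Gfac n q1 q3 μ (i,rk))
      = ∏ j ∈ (Finset.range k).filter
          (fun (j : ℕ) => ((((j : ℤ) + 1 - (μ.rowLen j : ℤ) : ℤ) : ZMod n) = (ℓ : ZMod n))),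
        (1 - ((q3 * (q1 ^ ((μ.rowLen j : ℤ) - (μ.rowLen k : ℤ)) *
               q3 ^ ((j : ℤ) - (k : ℤ))) : Rˣ) : R)) := by
    rw [Finset.prod_filter]
    refine Finset.prod_congr rfl (fun j hj => ?_)
    rw [Finset.mem_range] at hj
    rw [Gfac]
    refine if_congr ?_ ?_ rfl
    · have hhook : hookZ μ (j, rk) = (μ.rowLen j : ℤ) - rk + ((k : ℤ) - j - 1) := by
        simp only [hookZ, armZ, legZ, hF3]
        push_cast
        ring
      rw [hhook, hℓ]
      push_cast
      constructor <;> intro h <;> linear_combination -h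
    · have ha : armZ μ (j, rk) + 1 = (μ.rowLen j : ℤ) - rk := by
        simp only [armZ]; push_cast; ring
      have hl : -legZ μ (j, rk) = 1 + ((j:ℤ) - k) := by
        simp only [legZ, hF3]; push_cast; ring
      rw [ha, hl, zpow_add, zpow_one, mul_left_comm]
  have hcolR : (∏ i ∈ Finset.range k, Gfac n q1 q3 μ' (i,rk))
      = ∏ j ∈ (Finset.range k).filter
          (fun (j : ℕ) => ((((j : ℤ) + 1 - (μ.rowLen j : ℤ) : ℤ) : ZMod n) = (ℓ : ZMod n) + 1)),
        (1 - ((q1 ^ ((μ.rowLen j : ℤ) - (μ.rowLen k : ℤ)) *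
               q3 ^ ((j : ℤ) - (k : ℤ)) : Rˣ) : R)) := by
    rw [Finset.prod_filter]
    refine Finset.prod_congr rfl (fun j hj => ?_)
    rw [Finset.mem_range] at hj
    rw [Gfac]
    refine if_congr ?_ ?_ rfl
    · have hhook : hookZ μ' (j, rk) = (μ.rowLen j : ℤ) - rk + ((k : ℤ) - j) := by
        simp only [hookZ, armZ, legZ, hF4, hF2 j (by omega)]
        push_cast
        ring
      rw [hhook, hℓ]
      push_cast
      constructor <;> intro h <;> linear_combination -h
    · have ha : armZ μ' (j, rk) + 1 = (μ.rowLen j : ℤ) - rk := by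
        simp only [armZ, hF2 j (by omega)]; push_cast; ring
      have hl : -legZ μ' (j, rk) = (j:ℤ) - k := by
        simp only [legZ, hF4]; push_cast; ring
      rw [ha, hl]
  have unit_fac1 : ∀ (u v : Rˣ) (a b : ℤ), u * (u^a * v^b) = u^(1+a) * v^b := by
    intro u v a b
    rw [zpow_add, zpow_one, mul_assoc]
  have unit_fac2 : ∀ (u v : Rˣ) (a b : ℤ), (u*v) * (u^a * v^b) = u^(1+a) * v^(1+b) := by
    intro u v a b
    rw [zpow_add, zpow_add, zpow_one, zpow_one, mul_mul_mul_comm]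
  have hrowlem : (∏ j ∈ Finset.range rk, Gfac n q1 q3 μ' (k,j)) *
      (∏ j ∈ (Finset.Ico (k + 1) L).filter
          (fun (j : ℕ) => ((((j : ℤ) + 1 - (μ.rowLen j : ℤ) : ℤ) : ZMod n) = (ℓ : ZMod n))),
        (1 - ((q1 * (q1 ^ ((rk : ℤ) - (μ.rowLen j : ℤ)) *
               q3 ^ ((k : ℤ) - (j : ℤ))) : Rˣ) : R)))
    = (∏ j ∈ Finset.range rk, Gfac n q1 q3 μ (k,j)) *
      (∏ j ∈ (Finset.Ico (k + 1) (L + 1)).filter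
          (fun (j : ℕ) => ((((j : ℤ) + 1 - (μ.rowLen j : ℤ) : ℤ) : ZMod n) = (ℓ : ZMod n) + 1)),
        (1 - (((q1 * q3) * (q1 ^ ((rk : ℤ) - (μ.rowLen j : ℤ)) *
               q3 ^ ((k : ℤ) - (j : ℤ))) : Rˣ) : R))) := by
    rcases Nat.eq_zero_or_pos rk with h0 | hpos
    · have hLk : L ≤ k := by
        by_contra hc
        have hm0 : (k, 0) ∈ μ := YoungDiagram.mem_iff_lt_colLen.mpr (by omega)
        rw [YoungDiagram.mem_iff_lt_rowLen] at hm0; omega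
      rw [h0, Finset.Ico_eq_empty (by omega), Finset.Ico_eq_empty (by omega)]
      simp
    · have hLk : k + 1 ≤ L := by
        have hm0 : (k, 0) ∈ μ := YoungDiagram.mem_iff_lt_rowLen.mpr (by omega)
        rw [YoungDiagram.mem_iff_lt_colLen] at hm0; omega
      set N := L - (k+1) with hNdef
      set σ : ℕ → ℕ := fun t => μ.rowLen (k+1+t) with hσdef
      have hσmono : ∀ s t : ℕ, s ≤ t → σ t ≤ σ s := fun s t h =>
        μ.rowLen_anti _ _ (by omega)
      have hσ0 : σ 0 ≤ rk := by
        have := μ.rowLen_anti k (k+1) (by omega)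
        simpa [hσdef] using this
      have hrowL : μ.rowLen L = 0 := by
        by_contra hc
        have hm0 : (L, 0) ∈ μ := YoungDiagram.mem_iff_lt_rowLen.mpr (by omega)
        rw [YoungDiagram.mem_iff_lt_colLen] at hm0; omega
      have hσN : σ N = 0 := by
        have he : k + 1 + N = L := by omega
        simp only [hσdef, he, hrowL]
      have hσpos : ∀ t, t < N → 1 ≤ σ t := by
        intro t ht
        have hm0 : (k+1+t, 0) ∈ μ := YoungDiagram.mem_iff_lt_colLen.mpr (by omega)
        rw [YoungDiagram.mem_iff_lt_rowLen] at hm0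
        exact hm0
      have hleg : ∀ m, m < rk → μ.colLen (rk - 1 - m) = k + 1 + Wc rk N σ m := by
        intro m hm
        have hjk : (k, rk - 1 - m) ∈ μ := YoungDiagram.mem_iff_lt_rowLen.mpr (by omega)
        have hge : k + 1 ≤ μ.colLen (rk - 1 - m) := by
          rw [YoungDiagram.mem_iff_lt_colLen] at hjk; omega
        have hle2 : μ.colLen (rk - 1 - m) ≤ L := by
          rw [hL]; exact μ.colLen_anti 0 _ (by omega)
        have hfilt : (Finset.range N).filter (fun t => rk ≤ σ t + m)
            = (Finset.range N).filter (fun t => k + 1 + t < μ.colLen (rk - 1 - m)) := by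
          refine Finset.filter_congr (fun t ht => ?_)
          rw [Finset.mem_range] at ht
          have e1 : (k+1+t, rk-1-m) ∈ μ ↔ rk - 1 - m < σ t := YoungDiagram.mem_iff_lt_rowLen
          have e2 : (k+1+t, rk-1-m) ∈ μ ↔ k+1+t < μ.colLen (rk-1-m) :=
            YoungDiagram.mem_iff_lt_colLen
          constructor
          · intro h; exact e2.mp (e1.mpr (by omega))
          · intro h; have := e1.mp (e2.mpr h); omega
        rw [Wc, hfilt]
        have hrange : (Finset.range N).filter (fun t => k + 1 + t < μ.colLen (rk - 1 - m))
            = Finset.range (μ.colLen (rk - 1 - m) - (k+1)) := by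
          ext t
          simp only [Finset.mem_filter, Finset.mem_range]
          omega
        rw [hrange, Finset.card_range]
        omega
      have hA1 : (∏ j ∈ Finset.range rk, Gfac n q1 q3 μ' (k,j))
          = ((((Finset.range rk).val.map
                (fun (m:ℕ) => ((((m:ℤ)+2, (Wc rk N σ m : ℤ))) : ℤ×ℤ))).filter
              (fun p : ℤ×ℤ => (((p.1+p.2 : ℤ) : ZMod n) = 0))).map
            (fun p : ℤ×ℤ => (1 - ((q1 ^ p.1 * q3 ^ (-p.2) : Rˣ) : R)))).prod := by
        rw [← Finset.prod_range_reflect]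
        refine Eq.trans (Finset.prod_congr rfl fun m hm => ?_)
          (prod_pairs' n q1 q3 _ (fun m => (m:ℤ)+2) (fun m => (Wc rk N σ m : ℤ)))
        rw [Finset.mem_range] at hm
        rw [Gfac]
        have harm : armZ μ' (k, rk - 1 - m) + 1 = (m:ℤ)+2 := by
          simp only [armZ, hF1]; omega
        have hlg : legZ μ' (k, rk - 1 - m) = (Wc rk N σ m : ℤ) := by
          simp only [legZ]
          rw [hF5 _ (by omega), hleg m hm]
          omega
        refine if_congr ?_ ?_ rfl
        · have hh : hookZ μ' (k, rk - 1 - m) = (m:ℤ)+2 + (Wc rk N σ m : ℤ) := by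
            rw [hookZ]; omega
          rw [hh]
        · rw [harm, hlg]
      have hB1 : (∏ j ∈ Finset.range rk, Gfac n q1 q3 μ (k,j))
          = ((((Finset.range rk).val.map
                (fun (m:ℕ) => ((((m:ℤ)+1, (Wc rk N σ m : ℤ))) : ℤ×ℤ))).filter
              (fun p : ℤ×ℤ => (((p.1+p.2 : ℤ) : ZMod n) = 0))).map
            (fun p : ℤ×ℤ => (1 - ((q1 ^ p.1 * q3 ^ (-p.2) : Rˣ) : R)))).prod := by
        rw [← Finset.prod_range_reflect]
        refine Eq.trans (Finset.prod_congr rfl fun m hm => ?_)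
          (prod_pairs' n q1 q3 _ (fun m => (m:ℤ)+1) (fun m => (Wc rk N σ m : ℤ)))
        rw [Finset.mem_range] at hm
        rw [Gfac]
        have harm : armZ μ (k, rk - 1 - m) + 1 = (m:ℤ)+1 := by
          simp only [armZ]; omega
        have hlg : legZ μ (k, rk - 1 - m) = (Wc rk N σ m : ℤ) := by
          simp only [legZ]
          rw [hleg m hm]
          omega
        refine if_congr ?_ ?_ rfl
        · have hh : hookZ μ (k, rk - 1 - m) = (m:ℤ)+1 + (Wc rk N σ m : ℤ) := by
            rw [hookZ]; omega
          rw [hh]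
        · rw [harm, hlg]
      have hA2 : (∏ j ∈ (Finset.Ico (k + 1) L).filter
            (fun (j : ℕ) => ((((j : ℤ) + 1 - (μ.rowLen j : ℤ) : ℤ) : ZMod n) = (ℓ : ZMod n))),
          (1 - ((q1 * (q1 ^ ((rk : ℤ) - (μ.rowLen j : ℤ)) *
               q3 ^ ((k : ℤ) - (j : ℤ))) : Rˣ) : R)))
          = ((((Finset.range N).val.map
                (fun (t:ℕ) => (((1+(rk:ℤ)-(σ t : ℤ), (t:ℤ)+1)) : ℤ×ℤ))).filter
              (fun p : ℤ×ℤ => (((p.1+p.2 : ℤ) : ZMod n) = 0))).map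
            (fun p : ℤ×ℤ => (1 - ((q1 ^ p.1 * q3 ^ (-p.2) : Rˣ) : R)))).prod := by
        rw [Finset.prod_filter, Finset.prod_Ico_eq_prod_range, ← hNdef]
        refine Eq.trans (Finset.prod_congr rfl fun t ht => ?_)
          (prod_pairs' n q1 q3 _ (fun t => 1+(rk:ℤ)-(σ t : ℤ)) (fun t => (t:ℤ)+1))
        rw [Finset.mem_range] at ht
        simp only [hσdef]
        refine if_congr ?_ ?_ rfl
        · rw [hℓ]
          push_cast
          constructor <;> intro h <;> linear_combination h
        · rw [show ((k:ℤ)) - ((k+1+t : ℕ):ℤ) = -((t:ℤ)+1) from by push_cast; ring,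
            show (1:ℤ)+(rk:ℤ)-((μ.rowLen (k+1+t) : ℕ):ℤ)
              = 1+((rk:ℤ)-(μ.rowLen (k+1+t) : ℤ)) from by ring,
            unit_fac1]
      have hB2 : (∏ j ∈ (Finset.Ico (k + 1) (L + 1)).filter
            (fun (j : ℕ) => ((((j : ℤ) + 1 - (μ.rowLen j : ℤ) : ℤ) : ZMod n) = (ℓ : ZMod n) + 1)),
          (1 - (((q1 * q3) * (q1 ^ ((rk : ℤ) - (μ.rowLen j : ℤ)) *
               q3 ^ ((k : ℤ) - (j : ℤ))) : Rˣ) : R)))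
          = ((((Finset.range (N+1)).val.map
                (fun (t:ℕ) => (((1+(rk:ℤ)-(σ t : ℤ), (t:ℤ))) : ℤ×ℤ))).filter
              (fun p : ℤ×ℤ => (((p.1+p.2 : ℤ) : ZMod n) = 0))).map
            (fun p : ℤ×ℤ => (1 - ((q1 ^ p.1 * q3 ^ (-p.2) : Rˣ) : R)))).prod := by
        rw [Finset.prod_filter, Finset.prod_Ico_eq_prod_range,
          show L + 1 - (k+1) = N + 1 from by omega]
        refine Eq.trans (Finset.prod_congr rfl fun t ht => ?_)
          (prod_pairs' n q1 q3 _ (fun t => 1+(rk:ℤ)-(σ t : ℤ)) (fun t => (t:ℤ)))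
        rw [Finset.mem_range] at ht
        simp only [hσdef]
        refine if_congr ?_ ?_ rfl
        · rw [hℓ]
          push_cast
          constructor <;> intro h <;> linear_combination h
        · rw [show ((k:ℤ)) - ((k+1+t : ℕ):ℤ) = -((t:ℤ)+1) from by push_cast; ring,
            show (1:ℤ)+(rk:ℤ)-((μ.rowLen (k+1+t) : ℕ):ℤ)
              = 1+((rk:ℤ)-(μ.rowLen (k+1+t) : ℤ)) from by ring,
            unit_fac2,
            show (1:ℤ) + -((t:ℤ)+1) = -(t:ℤ) from by ring]
      rw [hA1, hB1, hA2, hB2]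
      rw [← Multiset.prod_add, ← Multiset.map_add, ← Multiset.filter_add,
        ← Multiset.prod_add, ← Multiset.map_add, ← Multiset.filter_add]
      have hm := mcore rk N σ hσmono hσ0 hσN hσpos
      simp only [Finset.range_val]
      rw [hm]
      have h10 : ¬ (((((((1:ℤ),(0:ℤ)) : ℤ×ℤ).1 + (((1:ℤ),(0:ℤ)) : ℤ×ℤ).2 : ℤ)) : ZMod n) = 0) := by
        norm_num
      simp only [Multiset.filter_add, Multiset.filter_singleton, h10, if_false, add_zero]
      norm_num
  rw [hE1, hE2, ← hcolL, ← hcolR]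
  linear_combination ((∏ i ∈ Finset.range k, Gfac n q1 q3 μ' (i,rk)) *
    (∏ i ∈ Finset.range k, Gfac n q1 q3 μ (i,rk)) *
    ∏ c ∈ μ.cells.filter (fun c => ¬ c.1 = k ∧ ¬ c.2 = rk), Gfac n q1 q3 μ c) * hrowlem
end

section
/- Let n ≥ 2, let λ be a Young diagram, let k be such that λ + 1_k is a Young diagram, and let ℓ be a residue mod n with ℓ ≡ k − λ_k − 1 (mod n). Then the number of boxes whose hook length is divisible by n changes as follows: #{s ∈ λ+1_k : h_{λ+1_k}(s) ≡ 0 (mod n)} − #{s ∈ λ : h_λ(s) ≡ 0 (mod n)} = #{s : 1 ≤ s ≤ ℓ(λ)+1, s ≠ k, s − λ_s ≡ ℓ+1 (mod n)} − #{s : 1 ≤ s ≤ ℓ(λ), s − λ_s ≡ ℓ (mod n)}. -/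
open Finset

lemma rowLen_eq' {μ : YoungDiagram} {i r : ℕ} (h1 : (i, r) ∉ μ) (h2 : ∀ j < r, (i, j) ∈ μ) :
    μ.rowLen i = r := by
  have ha : ¬ r < μ.rowLen i := fun h => h1 (YoungDiagram.mem_iff_lt_rowLen.mpr h)
  rcases Nat.eq_zero_or_pos r with hr | hr
  · omega
  · have := YoungDiagram.mem_iff_lt_rowLen.mp (h2 (r-1) (by omega))
    omega

lemma colLen_eq' {μ : YoungDiagram} {j r : ℕ} (h1 : (r, j) ∉ μ) (h2 : ∀ i < r, (i, j) ∈ μ) :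
    μ.colLen j = r := by
  have ha : ¬ r < μ.colLen j := fun h => h1 (YoungDiagram.mem_iff_lt_colLen.mpr h)
  rcases Nat.eq_zero_or_pos r with hr | hr
  · omega
  · have := YoungDiagram.mem_iff_lt_colLen.mp (h2 (r-1) (by omega))
    omega

/-- counting residues in `[1,M]`: class of `-1` minus class of `0` is `[n ∣ M+1]`. -/
lemma cnt_diff (n : ℕ) (hn : 2 ≤ n) (M : ℕ) :
    (((Finset.Icc 1 M).filter (fun y : ℕ => ((y : ℤ) : ZMod n) = -1)).card : ℤ)
      = (((Finset.Icc 1 M).filter (fun y : ℕ => ((y : ℤ) : ZMod n) = 0)).card : ℤ)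
        + (if (((M : ℤ) + 1 : ℤ) : ZMod n) = 0 then 1 else 0) := by
  haveI : Fact (1 < n) := ⟨by omega⟩
  induction M with
  | zero =>
      rw [show Finset.Icc 1 0 = ∅ by simp]
      simp only [Finset.filter_empty, Finset.card_empty, Nat.cast_zero, zero_add]
      rw [if_neg (by
        intro h
        push_cast at h
        exact one_ne_zero h)]
  | succ M ih =>
      rw [show Finset.Icc 1 (M+1) = insert (M+1) (Finset.Icc 1 M) by
            ext x; simp [Nat.lt_succ_iff]; omega,
          Finset.filter_insert, Finset.filter_insert]
      have hnm : (M + 1) ∉ Finset.Icc 1 M := by simp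
      have hc : ((((M+1:ℕ) : ℤ) + 1 : ℤ) : ZMod n) = 0 ↔ (((M+1:ℕ):ℤ) : ZMod n) = -1 := by
        constructor <;> intro h <;> push_cast at h ⊢ <;> linear_combination h
      have hbc : (((M:ℤ)+1 : ℤ) : ZMod n) = (((M+1:ℕ):ℤ) : ZMod n) := by push_cast; ring
      rw [hbc] at ih
      by_cases ha : (((M+1:ℕ):ℤ) : ZMod n) = -1 <;>
        by_cases hb : (((M+1:ℕ):ℤ) : ZMod n) = 0
      · rw [if_pos hb] at ih
        rw [if_pos ha, if_pos hb, if_pos (hc.mpr ha),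
          Finset.card_insert_of_notMem (fun h => hnm (Finset.filter_subset _ _ h)), Finset.card_insert_of_notMem (fun h => hnm (Finset.filter_subset _ _ h))]
        push_cast at ih ⊢; omega
      · rw [if_neg hb] at ih
        rw [if_pos ha, if_neg hb, if_pos (hc.mpr ha), Finset.card_insert_of_notMem (fun h => hnm (Finset.filter_subset _ _ h))]
        push_cast at ih ⊢; omega
      · rw [if_pos hb] at ih
        rw [if_neg ha, if_pos hb, if_neg (fun h => ha (hc.mp h)),
          Finset.card_insert_of_notMem (fun h => hnm (Finset.filter_subset _ _ h))]
        push_cast at ih ⊢; omega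
      · rw [if_neg hb] at ih
        rw [if_neg ha, if_neg hb, if_neg (fun h => ha (hc.mp h))]
        push_cast at ih ⊢; omega

/-- Classical fact, counting version: the hook lengths of row `k` together with the
differences `β_k - β_s` (s > k) fill the interval `[1, β_k]`, `β_s = λ_s + L - s`. -/
lemma row_count (μ : YoungDiagram) (k : ℕ) (hk : k ≤ μ.colLen 0)
    (p : ℕ → Prop) [DecidablePred p] :
    ((Finset.range (μ.rowLen k)).filter
        (fun j => p (μ.rowLen k - j + (μ.colLen j - (k+1))))).card
      + ((Finset.Ioc k (μ.colLen 0)).filter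
        (fun s => p (μ.rowLen k - μ.rowLen s + (s - k)))).card
    = ((Finset.Icc 1 (μ.rowLen k + (μ.colLen 0 - k))).filter p).card := by
  classical
  set j0 := μ.rowLen k with hj0
  set L := μ.colLen 0 with hL
  set M := j0 + (L - k) with hM
  set F : ℕ → ℕ := fun x =>
    if x < j0 then j0 - x + (μ.colLen x - (k+1))
    else j0 - μ.rowLen (x - j0) + ((x - j0) - k) with hF
  set D : Finset ℕ := Finset.range j0 ∪ Finset.Ioc (j0+k) (j0+L) with hD
  have fact1 : ∀ j, j < j0 → k < μ.colLen j := fun j hj =>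
    YoungDiagram.mem_iff_lt_colLen.mp (YoungDiagram.mem_iff_lt_rowLen.mpr hj)
  have fact2 : ∀ j, μ.colLen j ≤ L := fun j => μ.colLen_anti 0 j (Nat.zero_le j)
  have fact3 : ∀ s, k ≤ s → μ.rowLen s ≤ j0 := fun s hs => μ.rowLen_anti k s hs
  have fact4 : ∀ s x, x < μ.rowLen s ↔ s < μ.colLen x := fun s x =>
    ⟨fun h => YoungDiagram.mem_iff_lt_colLen.mp (YoungDiagram.mem_iff_lt_rowLen.mpr h),
     fun h => YoungDiagram.mem_iff_lt_rowLen.mp (YoungDiagram.mem_iff_lt_colLen.mpr h)⟩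
  have hdisj : Disjoint (Finset.range j0) (Finset.Ioc (j0+k) (j0+L)) := by
    rw [Finset.disjoint_left]
    intro a ha hb
    rw [Finset.mem_range] at ha
    rw [Finset.mem_Ioc] at hb
    omega
  have cardD : D.card = M := by
    rw [hD, Finset.card_union_of_disjoint hdisj, Finset.card_range, Nat.card_Ioc]
    omega
  have key : ∀ x ∈ D, ∀ y ∈ D, x < y → F x ≠ F y := by
    intro x hx y hy hxy
    rw [hD, Finset.mem_union, Finset.mem_range, Finset.mem_Ioc] at hx hy
    by_cases h1 : y < j0
    · have hx1 : x < j0 := by omega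
      have c1 := fact1 x hx1
      have c2 := fact1 y h1
      have c3 : μ.colLen y ≤ μ.colLen x := μ.colLen_anti x y (le_of_lt hxy)
      simp only [hF, if_pos hx1, if_pos h1]
      omega
    · by_cases h2 : x < j0
      · have hy2 : j0 + k < y ∧ y ≤ j0 + L := by omega
        simp only [hF, if_pos h2, if_neg h1]
        have f3 : μ.rowLen (y - j0) ≤ j0 := fact3 _ (by omega)
        have c1 := fact1 x h2
        by_cases hc : x < μ.rowLen (y - j0)
        · have := (fact4 (y - j0) x).mp hc
          have := fact2 x
          omega
        · have : ¬ (y - j0) < μ.colLen x := fun h => hc ((fact4 (y - j0) x).mpr h)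
          omega
      · have hx2 : j0 + k < x ∧ x ≤ j0 + L := by omega
        have hy2 : j0 + k < y ∧ y ≤ j0 + L := by omega
        simp only [hF, if_neg h1, if_neg h2]
        have m1 : μ.rowLen (y - j0) ≤ μ.rowLen (x - j0) := μ.rowLen_anti _ _ (by omega)
        have f3 : μ.rowLen (x - j0) ≤ j0 := fact3 _ (by omega)
        omega
  have hinj : Set.InjOn F ↑D := by
    intro x hx y hy hfe
    by_contra hne
    rcases Ne.lt_or_gt hne with h | h
    · exact key x (Finset.mem_coe.mp hx) y (Finset.mem_coe.mp hy) h hfe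
    · exact key y (Finset.mem_coe.mp hy) x (Finset.mem_coe.mp hx) h hfe.symm
  have hmaps : ∀ x ∈ D, F x ∈ Finset.Icc 1 M := by
    intro x hx
    rw [hD, Finset.mem_union, Finset.mem_range, Finset.mem_Ioc] at hx
    rw [Finset.mem_Icc]
    by_cases h2 : x < j0
    · simp only [hF, if_pos h2]
      have c1 := fact1 x h2
      have c2 := fact2 x
      omega
    · have hx2 : j0 + k < x ∧ x ≤ j0 + L := by omega
      simp only [hF, if_neg h2]
      have f3 : μ.rowLen (x - j0) ≤ j0 := fact3 _ (by omega)
      omega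
  have himg : D.image F = Finset.Icc 1 M := by
    apply Finset.eq_of_subset_of_card_le
    · intro y hy
      obtain ⟨x, hx, rfl⟩ := Finset.mem_image.mp hy
      exact hmaps x hx
    · rw [Finset.card_image_of_injOn hinj, cardD, Nat.card_Icc]
      omega
  have main : ((Finset.Icc 1 M).filter p).card = (D.filter (fun x => p (F x))).card := by
    rw [← himg, Finset.filter_image,
      Finset.card_image_of_injOn (hinj.mono (by exact_mod_cast Finset.filter_subset _ _))]
  rw [main, hD, Finset.filter_union,
    Finset.card_union_of_disjoint (Finset.disjoint_filter_filter hdisj)]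
  congr 1
  · apply congrArg Finset.card
    apply Finset.filter_congr
    intro x hx
    rw [Finset.mem_range] at hx
    simp only [hF, if_pos hx]
  · symm
    apply Finset.card_nbij (i := fun x => x - j0)
    · intro a ha
      rw [Finset.mem_coe, Finset.mem_filter, Finset.mem_Ioc] at ha ⊢
      constructor
      · dsimp only; omega
      · have : ¬ a < j0 := by omega
        simpa only [hF, if_neg this] using ha.2
    · intro x hx y hy hxy
      simp only [Finset.coe_filter, Set.mem_setOf_eq, Finset.mem_Ioc] at hx hy
      dsimp only at hxy
      omega
    · intro b hb
      simp only [Finset.coe_filter, Set.mem_setOf_eq, Finset.mem_Ioc] at hb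
      refine ⟨j0 + b, ?_, by dsimp only; omega⟩
      simp only [Finset.coe_filter, Set.mem_setOf_eq, Finset.mem_Ioc]
      have hnlt : ¬ j0 + b < j0 := by omega
      have hsub : j0 + b - j0 = b := by omega
      refine ⟨⟨by omega, by omega⟩, ?_⟩
      simp only [hF, if_neg hnlt, hsub]
      exact hb.2


/-- When a box of color `ℓ` is added in row `k` (0-based; 1-based row index `k+1`),
the change in the number of boxes whose hook length is divisible by `n` equals
`#{1 ≤ s ≤ ℓ(λ)+1, s ≠ k+1, s - λ_s ≡ ℓ+1} - #{1 ≤ s ≤ ℓ(λ), s - λ_s ≡ ℓ}` (mod n). -/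
theorem hook_count_change (n : ℕ) (hn : 2 ≤ n) (μ μ' : YoungDiagram) (k : ℕ) (ℓ : ℤ)
    (hadd : μ'.cells = insert (k, μ.rowLen k) μ.cells)
    (hcol : (ℓ : ZMod n) = (((k : ℤ) + 1 - (μ.rowLen k : ℤ) - 1 : ℤ) : ZMod n)) :
    ((μ'.cells.filter (fun c => ((hookZ μ' c : ZMod n) = 0))).card : ℤ)
      - ((μ.cells.filter (fun c => ((hookZ μ c : ZMod n) = 0))).card : ℤ)
    = (((Finset.range (μ.colLen 0 + 1)).filter
          (fun (s : ℕ) => s ≠ k ∧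
            ((((s : ℤ) + 1 - (μ.rowLen s : ℤ) : ℤ) : ZMod n) = (ℓ : ZMod n) + 1))).card : ℤ)
      - (((Finset.range (μ.colLen 0)).filter
          (fun (s : ℕ) =>
            ((((s : ℤ) + 1 - (μ.rowLen s : ℤ) : ℤ) : ZMod n) = (ℓ : ZMod n)))).card : ℤ) := by
  classical
  haveI : Fact (1 < n) := ⟨by omega⟩
  have hone : ((1 : ℤ) : ZMod n) ≠ 0 := by
    push_cast; exact one_ne_zero
  -- notation
  -- basic membership facts
  have hnew : (k, μ.rowLen k) ∉ μ := by
    rw [YoungDiagram.mem_iff_lt_rowLen]; omega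
  have hmem' : ∀ c : ℕ × ℕ, c ∈ μ' ↔ c = (k, μ.rowLen k) ∨ c ∈ μ := by
    intro c
    rw [← YoungDiagram.mem_cells, hadd, Finset.mem_insert, YoungDiagram.mem_cells]
  have hnewmem : (k, μ.rowLen k) ∈ μ' := (hmem' _).mpr (Or.inl rfl)
  -- row lengths of μ'
  have hrow' : ∀ i, μ'.rowLen i = if i = k then μ.rowLen k + 1 else μ.rowLen i := by
    intro i
    split_ifs with h
    · subst h
      apply rowLen_eq'
      · intro hmem
        rcases (hmem' _).mp hmem with h | h
        · exact absurd (congrArg Prod.snd h) (by simp)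
        · rw [YoungDiagram.mem_iff_lt_rowLen] at h; omega
      · intro j hj
        rcases Nat.lt_succ_iff_lt_or_eq.mp hj with h | h
        · exact (hmem' _).mpr (Or.inr (YoungDiagram.mem_iff_lt_rowLen.mpr h))
        · subst h; exact hnewmem
    · apply rowLen_eq'
      · intro hmem
        rcases (hmem' _).mp hmem with h2 | h2
        · exact h (congrArg Prod.fst h2)
        · rw [YoungDiagram.mem_iff_lt_rowLen] at h2; omega
      · intro j hj
        exact (hmem' _).mpr (Or.inr (YoungDiagram.mem_iff_lt_rowLen.mpr hj))
  -- column j0 of μ has length exactly k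
  have hcolj0 : μ.colLen (μ.rowLen k) = k := by
    apply colLen_eq' hnew
    intro i hi
    have : (i, μ.rowLen k) ∈ μ' := μ'.up_left_mem (le_of_lt hi) le_rfl hnewmem
    rcases (hmem' _).mp this with h | h
    · exact absurd (congrArg Prod.fst h) (by omega)
    · exact h
  have hkL : k ≤ μ.colLen 0 := hcolj0 ▸ μ.colLen_anti 0 (μ.rowLen k) (Nat.zero_le _)
  -- column lengths of μ'
  have hcol' : ∀ j, μ'.colLen j = if j = μ.rowLen k then k + 1 else μ.colLen j := by
    intro j
    split_ifs with h
    · subst h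
      apply colLen_eq'
      · intro hmem
        rcases (hmem' _).mp hmem with h | h
        · exact absurd (congrArg Prod.fst h) (by omega)
        · rw [YoungDiagram.mem_iff_lt_colLen, hcolj0] at h; omega
      · intro i hi
        rcases Nat.lt_succ_iff_lt_or_eq.mp hi with h | h
        · exact (hmem' _).mpr (Or.inr (YoungDiagram.mem_iff_lt_colLen.mpr (by omega)))
        · subst h; exact hnewmem
    · apply colLen_eq'
      · intro hmem
        rcases (hmem' _).mp hmem with h2 | h2
        · exact h (congrArg Prod.snd h2)
        · rw [YoungDiagram.mem_iff_lt_colLen] at h2; omega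
      · intro i hi
        exact (hmem' _).mpr (Or.inr (YoungDiagram.mem_iff_lt_colLen.mpr hi))
  have hrowL : μ.rowLen (μ.colLen 0) = 0 := by
    apply rowLen_eq'
    · rw [YoungDiagram.mem_iff_lt_colLen]; omega
    · omega
  -- the new box has hook length 1
  have hooknew : hookZ μ' (k, μ.rowLen k) = 1 := by
    unfold hookZ armZ legZ
    rw [show (k, μ.rowLen k).1 = k from rfl, show (k, μ.rowLen k).2 = μ.rowLen k from rfl,
      hrow' k, hcol' (μ.rowLen k), if_pos rfl, if_pos rfl]
    push_cast
    ring
  have stepA : (μ'.cells.filter (fun c => ((hookZ μ' c : ZMod n) = 0))).card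
      = (μ.cells.filter (fun c => ((hookZ μ' c : ZMod n) = 0))).card := by
    rw [hadd, Finset.filter_insert, if_neg]
    rw [hooknew]
    exact hone
  -- pointwise change of hook lengths
  have hookeq : ∀ c : ℕ × ℕ, c ∈ μ →
      hookZ μ' c = hookZ μ c
        + (if c.1 = k then 1 else 0) + (if c.2 = μ.rowLen k then 1 else 0) := by
    intro c hc
    obtain ⟨a, b⟩ := c
    unfold hookZ armZ legZ
    dsimp only
    rw [hrow' a, hcol' b]
    by_cases h1 : a = k
    · by_cases h2 : b = μ.rowLen k
      · exfalso
        apply hnew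
        have : (a, b) = (k, μ.rowLen k) := by rw [h1, h2]
        rwa [this] at hc
      · subst h1
        rw [if_pos rfl, if_pos rfl, if_neg h2, if_neg h2]
        push_cast
        ring
    · by_cases h2 : b = μ.rowLen k
      · subst h2
        rw [if_neg h1, if_neg h1, if_pos rfl, if_pos rfl, hcolj0]
        push_cast
        ring
      · rw [if_neg h1, if_neg h1, if_neg h2, if_neg h2]
        push_cast
        ring
    -- splitting the cells of μ into row k, column j0, and the rest
  have hsplit : ∀ (r : ℕ × ℕ → Prop) (inst : DecidablePred r),
      (μ.cells.filter r).card
        = ((μ.cells.filter (fun c => c.1 = k)).filter r).card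
          + ((μ.cells.filter (fun c => c.1 ≠ k ∧ c.2 = μ.rowLen k)).filter r).card
          + ((μ.cells.filter (fun c => c.1 ≠ k ∧ c.2 ≠ μ.rowLen k)).filter r).card := by
    intro r inst
    have hU : μ.cells = ((μ.cells.filter (fun c => c.1 = k))
        ∪ (μ.cells.filter (fun c => c.1 ≠ k ∧ c.2 = μ.rowLen k)))
        ∪ (μ.cells.filter (fun c => c.1 ≠ k ∧ c.2 ≠ μ.rowLen k)) := by
      ext c
      simp only [Finset.mem_union, Finset.mem_filter]
      tauto
    have d12 : Disjoint (μ.cells.filter (fun c => c.1 = k))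
        (μ.cells.filter (fun c => c.1 ≠ k ∧ c.2 = μ.rowLen k)) := by
      rw [Finset.disjoint_left]
      intro a ha hb
      rw [Finset.mem_filter] at ha hb
      exact hb.2.1 ha.2
    have d13 : Disjoint (μ.cells.filter (fun c => c.1 = k))
        (μ.cells.filter (fun c => c.1 ≠ k ∧ c.2 ≠ μ.rowLen k)) := by
      rw [Finset.disjoint_left]
      intro a ha hb
      rw [Finset.mem_filter] at ha hb
      exact hb.2.1 ha.2
    have d23 : Disjoint (μ.cells.filter (fun c => c.1 ≠ k ∧ c.2 = μ.rowLen k))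
        (μ.cells.filter (fun c => c.1 ≠ k ∧ c.2 ≠ μ.rowLen k)) := by
      rw [Finset.disjoint_left]
      intro a ha hb
      rw [Finset.mem_filter] at ha hb
      exact hb.2.2 ha.2.2
    conv_lhs => rw [hU]
    rw [Finset.filter_union, Finset.filter_union,
      Finset.card_union_of_disjoint (Finset.disjoint_union_left.mpr
        ⟨Finset.disjoint_filter_filter d13, Finset.disjoint_filter_filter d23⟩),
      Finset.card_union_of_disjoint (Finset.disjoint_filter_filter d12)]
  -- row k of μ as a range
  have hA1 : ∀ (r : ℕ × ℕ → Prop) (inst : DecidablePred r),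
      ((μ.cells.filter (fun c => c.1 = k)).filter r).card
        = ((Finset.range (μ.rowLen k)).filter (fun j => r (k, j))).card := by
    intro r inst
    have him : μ.cells.filter (fun c => c.1 = k)
        = (Finset.range (μ.rowLen k)).image (fun j => (k, j)) := by
      ext c
      obtain ⟨a, b⟩ := c
      simp only [Finset.mem_filter, Finset.mem_image, Finset.mem_range,
        YoungDiagram.mem_cells]
      constructor
      · rintro ⟨hm, rfl⟩
        exact ⟨b, YoungDiagram.mem_iff_lt_rowLen.mp hm, rfl⟩
      · rintro ⟨j, hj, hji⟩
        obtain ⟨rfl, rfl⟩ : k = a ∧ j = b := Prod.mk.injEq .. ▸ hji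
        exact ⟨YoungDiagram.mem_iff_lt_rowLen.mpr hj, rfl⟩
    rw [him, Finset.filter_image]
    apply Finset.card_image_of_injOn
    intro x _ y _ hxy
    exact (Prod.ext_iff.mp hxy).2
  -- column j0 of μ (minus row k, which is automatic) as a range
  have hA2 : ∀ (r : ℕ × ℕ → Prop) (inst : DecidablePred r),
      ((μ.cells.filter (fun c => c.1 ≠ k ∧ c.2 = μ.rowLen k)).filter r).card
        = ((Finset.range k).filter (fun i => r (i, μ.rowLen k))).card := by
    intro r inst
    have him : μ.cells.filter (fun c => c.1 ≠ k ∧ c.2 = μ.rowLen k)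
        = (Finset.range k).image (fun i => (i, μ.rowLen k)) := by
      ext c
      obtain ⟨a, b⟩ := c
      simp only [Finset.mem_filter, Finset.mem_image, Finset.mem_range,
        YoungDiagram.mem_cells]
      constructor
      · rintro ⟨hm, hak, rfl⟩
        have := YoungDiagram.mem_iff_lt_colLen.mp hm
        exact ⟨a, by omega, rfl⟩
      · rintro ⟨i, hi, hji⟩
        obtain ⟨rfl, rfl⟩ : i = a ∧ μ.rowLen k = b := Prod.mk.injEq .. ▸ hji
        exact ⟨YoungDiagram.mem_iff_lt_colLen.mpr (by omega), by omega, rfl⟩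
    rw [him, Finset.filter_image]
    apply Finset.card_image_of_injOn
    intro x _ y _ hxy
    exact (Prod.ext_iff.mp hxy).1
  -- hook values in row k
  have hval1 : ∀ j, j < μ.rowLen k →
      hookZ μ (k, j) = ((μ.rowLen k - j + (μ.colLen j - (k+1)) : ℕ) : ℤ) := by
    intro j hj
    have h1 : k < μ.colLen j :=
      YoungDiagram.mem_iff_lt_colLen.mp (YoungDiagram.mem_iff_lt_rowLen.mpr hj)
    unfold hookZ armZ legZ
    dsimp only
    omega
  -- hook values in column j0
  have hval2 : ∀ i : ℕ,
      hookZ μ (i, μ.rowLen k) = (μ.rowLen i : ℤ) - μ.rowLen k + k - i - 1 := by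
    intro i
    unfold hookZ armZ legZ
    dsimp only
    rw [hcolj0]
    ring
  -- count in row k, new hooks (≡ 0 iff old hook ≡ -1)
  have H1 : ((μ.cells.filter (fun c => c.1 = k)).filter
        (fun c => ((hookZ μ' c : ZMod n) = 0))).card
      = ((Finset.range (μ.rowLen k)).filter
        (fun j => (((μ.rowLen k - j + (μ.colLen j - (k+1)) : ℕ) : ℤ) : ZMod n) = -1)).card := by
    refine Eq.trans (hA1 (fun c => ((hookZ μ' c : ZMod n) = 0)) (by infer_instance)) ?_
    apply congrArg Finset.card
    apply Finset.filter_congr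
    intro j hj
    rw [Finset.mem_range] at hj
    have hm : (k, j) ∈ μ := YoungDiagram.mem_iff_lt_rowLen.mpr hj
    rw [hookeq _ hm, hval1 j hj]
    have e1 : ((k, j).1 = k) := rfl
    have e2 : ¬ ((k, j).2 = μ.rowLen k) := by dsimp only; omega
    rw [if_pos e1, if_neg e2]
    push_cast
    constructor <;> intro h <;> linear_combination h
  -- count in row k, old hooks
  have H2 : ((μ.cells.filter (fun c => c.1 = k)).filter
        (fun c => ((hookZ μ c : ZMod n) = 0))).card
      = ((Finset.range (μ.rowLen k)).filter
        (fun j => (((μ.rowLen k - j + (μ.colLen j - (k+1)) : ℕ) : ℤ) : ZMod n) = 0)).card := by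
    refine Eq.trans (hA1 (fun c => ((hookZ μ c : ZMod n) = 0)) (by infer_instance)) ?_
    apply congrArg Finset.card
    apply Finset.filter_congr
    intro j hj
    rw [Finset.mem_range] at hj
    rw [hval1 j hj]
  -- count in column j0, new hooks
  have H3 : ((μ.cells.filter (fun c => c.1 ≠ k ∧ c.2 = μ.rowLen k)).filter
        (fun c => ((hookZ μ' c : ZMod n) = 0))).card
      = ((Finset.range k).filter
        (fun (s : ℕ) => ((((s : ℤ) + 1 - (μ.rowLen s : ℤ) : ℤ) : ZMod n) = (ℓ : ZMod n) + 1))).card := by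
    refine Eq.trans (hA2 (fun c => ((hookZ μ' c : ZMod n) = 0)) (by infer_instance)) ?_
    apply congrArg Finset.card
    apply Finset.filter_congr
    intro i hi
    rw [Finset.mem_range] at hi
    have hm : (i, μ.rowLen k) ∈ μ := YoungDiagram.mem_iff_lt_colLen.mpr (by omega)
    rw [hookeq _ hm, hval2 i]
    have e1 : ¬ ((i, μ.rowLen k).1 = k) := by dsimp only; omega
    have e2 : ((i, μ.rowLen k).2 = μ.rowLen k) := rfl
    rw [if_neg e1, if_pos e2, hcol]
    push_cast
    constructor <;> intro h <;> linear_combination -h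
  -- count in column j0, old hooks
  have H4 : ((μ.cells.filter (fun c => c.1 ≠ k ∧ c.2 = μ.rowLen k)).filter
        (fun c => ((hookZ μ c : ZMod n) = 0))).card
      = ((Finset.range k).filter
        (fun (s : ℕ) => ((((s : ℤ) + 1 - (μ.rowLen s : ℤ) : ℤ) : ZMod n) = (ℓ : ZMod n)))).card := by
    refine Eq.trans (hA2 (fun c => ((hookZ μ c : ZMod n) = 0)) (by infer_instance)) ?_
    apply congrArg Finset.card
    apply Finset.filter_congr
    intro i hi
    rw [Finset.mem_range] at hi
    rw [hval2 i, hcol]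
    push_cast
    constructor <;> intro h <;> linear_combination -h
  -- outside row k and column j0 nothing changes
  have H5 : ((μ.cells.filter (fun c => c.1 ≠ k ∧ c.2 ≠ μ.rowLen k)).filter
        (fun c => ((hookZ μ' c : ZMod n) = 0))).card
      = ((μ.cells.filter (fun c => c.1 ≠ k ∧ c.2 ≠ μ.rowLen k)).filter
        (fun c => ((hookZ μ c : ZMod n) = 0))).card := by
    apply congrArg Finset.card
    apply Finset.filter_congr
    intro c hc
    rw [Finset.mem_filter, YoungDiagram.mem_cells] at hc
    rw [hookeq _ hc.1, if_neg hc.2.1, if_neg hc.2.2, add_zero, add_zero]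
    -- the classical interval bijection for row k, for both residue classes
  have H6 : ((Finset.range (μ.rowLen k)).filter
        (fun j => (((μ.rowLen k - j + (μ.colLen j - (k+1)) : ℕ) : ℤ) : ZMod n) = -1)).card
      + ((Finset.Ioc k (μ.colLen 0)).filter
        (fun s => (((μ.rowLen k - μ.rowLen s + (s - k) : ℕ) : ℤ) : ZMod n) = -1)).card
      = ((Finset.Icc 1 (μ.rowLen k + (μ.colLen 0 - k))).filter
        (fun y : ℕ => ((y : ℤ) : ZMod n) = -1)).card :=
    row_count μ k hkL (fun y => ((y : ℤ) : ZMod n) = -1)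
  have H7 : ((Finset.range (μ.rowLen k)).filter
        (fun j => (((μ.rowLen k - j + (μ.colLen j - (k+1)) : ℕ) : ℤ) : ZMod n) = 0)).card
      + ((Finset.Ioc k (μ.colLen 0)).filter
        (fun s => (((μ.rowLen k - μ.rowLen s + (s - k) : ℕ) : ℤ) : ZMod n) = 0)).card
      = ((Finset.Icc 1 (μ.rowLen k + (μ.colLen 0 - k))).filter
        (fun y : ℕ => ((y : ℤ) : ZMod n) = 0)).card :=
    row_count μ k hkL (fun y => ((y : ℤ) : ZMod n) = 0)
  -- translating the beta-difference predicates to contents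
  have H8 : ((Finset.Ioc k (μ.colLen 0)).filter
        (fun s => (((μ.rowLen k - μ.rowLen s + (s - k) : ℕ) : ℤ) : ZMod n) = -1)).card
      = ((Finset.Ioc k (μ.colLen 0)).filter
        (fun (s : ℕ) => ((((s : ℤ) + 1 - (μ.rowLen s : ℤ) : ℤ) : ZMod n) = (ℓ : ZMod n)))).card := by
    apply congrArg Finset.card
    apply Finset.filter_congr
    intro q hq
    rw [Finset.mem_Ioc] at hq
    have hr : μ.rowLen q ≤ μ.rowLen k := μ.rowLen_anti k q (by omega)
    have hcast : ((μ.rowLen k - μ.rowLen q + (q - k) : ℕ) : ℤ)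
        = (μ.rowLen k : ℤ) - μ.rowLen q + q - k := by omega
    rw [hcast, hcol]
    push_cast
    constructor <;> intro h <;> linear_combination h
  have H9 : ((Finset.Ioc k (μ.colLen 0)).filter
        (fun s => (((μ.rowLen k - μ.rowLen s + (s - k) : ℕ) : ℤ) : ZMod n) = 0)).card
      = ((Finset.Ioc k (μ.colLen 0)).filter
        (fun (s : ℕ) => ((((s : ℤ) + 1 - (μ.rowLen s : ℤ) : ℤ) : ZMod n) = (ℓ : ZMod n) + 1))).card := by
    apply congrArg Finset.card
    apply Finset.filter_congr
    intro q hq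
    rw [Finset.mem_Ioc] at hq
    have hr : μ.rowLen q ≤ μ.rowLen k := μ.rowLen_anti k q (by omega)
    have hcast : ((μ.rowLen k - μ.rowLen q + (q - k) : ℕ) : ℤ)
        = (μ.rowLen k : ℤ) - μ.rowLen q + q - k := by omega
    rw [hcast, hcol]
    push_cast
    constructor <;> intro h <;> linear_combination h
  have H10 := cnt_diff n hn (μ.rowLen k + (μ.colLen 0 - k))
  -- decomposition of the first RHS count
  have H11 : ((Finset.range (μ.colLen 0 + 1)).filter
        (fun (s : ℕ) => s ≠ k ∧
          ((((s : ℤ) + 1 - (μ.rowLen s : ℤ) : ℤ) : ZMod n) = (ℓ : ZMod n) + 1))).card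
      = ((Finset.range k).filter
          (fun (s : ℕ) => ((((s : ℤ) + 1 - (μ.rowLen s : ℤ) : ℤ) : ZMod n) = (ℓ : ZMod n) + 1))).card
        + ((Finset.Ioc k (μ.colLen 0)).filter
          (fun (s : ℕ) => ((((s : ℤ) + 1 - (μ.rowLen s : ℤ) : ℤ) : ZMod n) = (ℓ : ZMod n) + 1))).card := by
    have hU : Finset.range (μ.colLen 0 + 1)
        = Finset.range k ∪ insert k (Finset.Ioc k (μ.colLen 0)) := by
      ext x
      simp only [Finset.mem_range, Finset.mem_union, Finset.mem_insert, Finset.mem_Ioc]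
      omega
    rw [hU, Finset.filter_union, Finset.filter_insert, if_neg (fun h => h.1 rfl),
      Finset.card_union_of_disjoint]
    · congr 1
      · apply congrArg Finset.card
        apply Finset.filter_congr
        intro x hx
        rw [Finset.mem_range] at hx
        constructor
        · exact fun h => h.2
        · exact fun h => ⟨by omega, h⟩
      · apply congrArg Finset.card
        apply Finset.filter_congr
        intro x hx
        rw [Finset.mem_Ioc] at hx
        constructor
        · exact fun h => h.2
        · exact fun h => ⟨by omega, h⟩
    · apply Finset.disjoint_filter_filter
      rw [Finset.disjoint_left]
      intro a ha hb
      rw [Finset.mem_range] at ha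
      rw [Finset.mem_Ioc] at hb
      omega
  -- decomposition of the second RHS count
  have H12 : ((Finset.range (μ.colLen 0)).filter
        (fun (s : ℕ) =>
          ((((s : ℤ) + 1 - (μ.rowLen s : ℤ) : ℤ) : ZMod n) = (ℓ : ZMod n)))).card
      = ((Finset.range k).filter
          (fun (s : ℕ) => ((((s : ℤ) + 1 - (μ.rowLen s : ℤ) : ℤ) : ZMod n) = (ℓ : ZMod n)))).card
        + ((Finset.Ico k (μ.colLen 0)).filter
          (fun (s : ℕ) => ((((s : ℤ) + 1 - (μ.rowLen s : ℤ) : ℤ) : ZMod n) = (ℓ : ZMod n)))).card := by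
    have hU : Finset.range (μ.colLen 0) = Finset.range k ∪ Finset.Ico k (μ.colLen 0) := by
      ext x
      simp only [Finset.mem_range, Finset.mem_union, Finset.mem_Ico]
      omega
    rw [hU, Finset.filter_union, Finset.card_union_of_disjoint]
    apply Finset.disjoint_filter_filter
    rw [Finset.disjoint_left]
    intro a ha hb
    rw [Finset.mem_range] at ha
    rw [Finset.mem_Ico] at hb
    omega
  -- comparing Ioc with Ico for the ℓ-class
  have H13 : (((Finset.Ioc k (μ.colLen 0)).filter
        (fun (s : ℕ) => ((((s : ℤ) + 1 - (μ.rowLen s : ℤ) : ℤ) : ZMod n) = (ℓ : ZMod n)))).card : ℤ)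
      = (((Finset.Ico k (μ.colLen 0)).filter
          (fun (s : ℕ) => ((((s : ℤ) + 1 - (μ.rowLen s : ℤ) : ℤ) : ZMod n) = (ℓ : ZMod n)))).card : ℤ)
        + (if ((((μ.rowLen k + (μ.colLen 0 - k) : ℕ) : ℤ) + 1 : ℤ) : ZMod n) = 0
            then 1 else 0) := by
    have hpk : ¬ ((((k : ℤ) + 1 - (μ.rowLen k : ℤ) : ℤ) : ZMod n) = (ℓ : ZMod n)) := by
      intro h
      rw [hcol] at h
      apply hone
      push_cast at h ⊢
      linear_combination h
    have hcondL : ((((μ.colLen 0 : ℤ) + 1 - (μ.rowLen (μ.colLen 0) : ℤ) : ℤ) : ZMod n)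
          = (ℓ : ZMod n))
        ↔ ((((μ.rowLen k + (μ.colLen 0 - k) : ℕ) : ℤ) + 1 : ℤ) : ZMod n) = 0 := by
      rw [hrowL, hcol]
      have hcast : ((μ.rowLen k + (μ.colLen 0 - k) : ℕ) : ℤ)
          = (μ.rowLen k : ℤ) + (μ.colLen 0 : ℤ) - k := by omega
      rw [hcast]
      push_cast
      constructor <;> intro h <;> linear_combination h
    rcases eq_or_lt_of_le hkL with he | hlt
    · have h1 : Finset.Ioc k (μ.colLen 0) = ∅ := by rw [← he]; exact Finset.Ioc_self k
      have h2 : Finset.Ico k (μ.colLen 0) = ∅ := by rw [← he]; exact Finset.Ico_self k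
      have hj0 : μ.rowLen k = 0 := by rw [he]; exact hrowL
      rw [h1, h2, if_neg]
      · simp
      · intro h
        apply hone
        have hz : (μ.rowLen k + (μ.colLen 0 - k) : ℕ) = 0 := by omega
        rw [hz] at h
        push_cast at h ⊢
        linear_combination h
    · rw [show Finset.Ioc k (μ.colLen 0) = insert (μ.colLen 0) (Finset.Ioo k (μ.colLen 0))
          from (Finset.Ioo_insert_right hlt).symm,
        show Finset.Ico k (μ.colLen 0) = insert k (Finset.Ioo k (μ.colLen 0))
          from (Finset.Ioo_insert_left hlt).symm,
        Finset.filter_insert, Finset.filter_insert, if_neg hpk]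
      by_cases hc : ((((μ.colLen 0 : ℤ) + 1 - (μ.rowLen (μ.colLen 0) : ℤ) : ℤ) : ZMod n)
          = (ℓ : ZMod n))
      · rw [if_pos hc, if_pos (hcondL.mp hc),
          Finset.card_insert_of_notMem (fun hmm => by
            have := Finset.mem_Ioo.mp (Finset.filter_subset _ _ hmm)
            omega)]
        push_cast
        ring
      · rw [if_neg hc, if_neg (fun h => hc (hcondL.mpr h))]
        push_cast
        ring
  -- final assembly
  have S1 := hsplit (fun c => ((hookZ μ' c : ZMod n) = 0)) (by infer_instance)
  have S2 := hsplit (fun c => ((hookZ μ c : ZMod n) = 0)) (by infer_instance)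
  by_cases hif : ((((μ.rowLen k + (μ.colLen 0 - k) : ℕ) : ℤ) + 1 : ℤ) : ZMod n) = 0
  · rw [if_pos hif] at H10 H13
    omega
  · rw [if_neg hif] at H10 H13
    omega
end

section
/- Let n ≥ 2 and let q1, q3, z be invertible elements of a commutative ring. Let λ and μ be Young diagrams, let j be such that μ + 1_j is a Young diagram, and let ℓ be a residue mod n with ℓ ≡ j − μ_j − 1 (mod n). Then the Nekrasov factor satisfies the recursion N_{λ, μ+1_j}(z; q1, q3) · ∏_{1≤i≤ℓ(λ), i−λ_i ≡ ℓ (mod n)} (1 − z q1^{λ_i−μ_j−1} q3^{i−j}) = N_{λμ}(z; q1, q3) · ∏_{1≤i≤ℓ(λ)+1, i−λ_i ≡ ℓ+1 (mod n)} (1 − z q1^{λ_i−μ_j−1} q3^{i−j−1}). -/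
open Finset

/-- Relative hook length `h_{λ,μ}(s) = a_μ(s) + ℓ_λ(s) + 1`. -/
def relHook (lam mu : YoungDiagram) (c : ℕ × ℕ) : ℤ := armZ mu c + legZ lam c + 1

/-- The bifundamental Nekrasov factor on `ALE_n × S¹`:
`N_{λμ}(z;q1,q3) = ∏_{s∈λ, h_{μ,λ}(s)≡0} (1 - z q1^{a_λ(s)} q3^{-ℓ_μ(s)-1})
  · ∏_{t∈μ, h_{λ,μ}(t)≡0} (1 - z q1^{-a_μ(t)-1} q3^{ℓ_λ(t)})`. -/
def nek {R : Type*} [CommRing R] (n : ℕ) (q1 q3 z : Rˣ) (lam mu : YoungDiagram) : R :=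
  (∏ s ∈ lam.cells.filter (fun s => ((relHook mu lam s : ZMod n) = 0)),
    (1 - ((z * q1 ^ armZ lam s * q3 ^ (-legZ mu s - 1) : Rˣ) : R))) *
  (∏ t ∈ mu.cells.filter (fun t => ((relHook lam mu t : ZMod n) = 0)),
    (1 - ((z * q1 ^ (-armZ mu t - 1) * q3 ^ legZ lam t : Rˣ) : R)))

lemma prod_telescope {M : Type*} [CommMonoid M] (G : ℕ → M) {a b : ℕ} (h : a ≤ b) :
    G a * ∏ i ∈ Ico a b, G (i+1) = G b * ∏ i ∈ Ico a b, G i := by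
  induction b, h using Nat.le_induction with
  | base => simp
  | succ b hab ih =>
      rw [Finset.prod_Ico_succ_top hab, Finset.prod_Ico_succ_top hab, ← mul_assoc, ih]
      ac_rfl

lemma rowLen_eq_of_iff {μ : YoungDiagram} {i r : ℕ} (h : ∀ c, (i, c) ∈ μ ↔ c < r) :
    μ.rowLen i = r := by
  have h1 : ∀ c, c < μ.rowLen i ↔ c < r := fun c =>
    (YoungDiagram.mem_iff_lt_rowLen).symm.trans (h c)
  have h2 := h1 r
  have h3 := h1 (μ.rowLen i)
  omega

lemma colLen_eq_of_iff {μ : YoungDiagram} {c r : ℕ} (h : ∀ i, (i, c) ∈ μ ↔ i < r) :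
    μ.colLen c = r := by
  have h1 : ∀ i, i < μ.colLen c ↔ i < r := fun i =>
    (YoungDiagram.mem_iff_lt_colLen).symm.trans (h i)
  have h2 := h1 r
  have h3 := h1 (μ.colLen c)
  omega

lemma rowLen_eq_zero' {lam : YoungDiagram} {i : ℕ} (h : lam.colLen 0 ≤ i) : lam.rowLen i = 0 := by
  have h1 := (@YoungDiagram.mem_iff_lt_rowLen lam i 0).symm.trans
    (@YoungDiagram.mem_iff_lt_colLen lam i 0)
  omega

lemma rowLen_eq_succ' {lam : YoungDiagram} {i m : ℕ} (h1 : lam.colLen (m+1) ≤ i)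
    (h2 : i < lam.colLen m) : lam.rowLen i = m + 1 := by
  have a1 := (@YoungDiagram.mem_iff_lt_rowLen lam i m).symm.trans
    (@YoungDiagram.mem_iff_lt_colLen lam i m)
  have a2 := (@YoungDiagram.mem_iff_lt_rowLen lam i (m+1)).symm.trans
    (@YoungDiagram.mem_iff_lt_colLen lam i (m+1))
  omega

lemma key_prod {R : Type*} [CommRing R] (F : ℕ → ℕ → R) (lam : YoungDiagram) (m : ℕ) :
    (∏ c ∈ range (m+1), F c (lam.colLen c)) *
      (∏ i ∈ Ico (lam.colLen m) (lam.colLen 0), F (lam.rowLen i) (i+1))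
    = (∏ c ∈ range m, F (c+1) (lam.colLen c)) *
      (∏ i ∈ Ico (lam.colLen m) (lam.colLen 0 + 1), F (lam.rowLen i) i) := by
  induction m with
  | zero =>
      simp only [Nat.zero_add, prod_range_one, range_zero, prod_empty, Ico_self, one_mul,
        mul_one]
      rw [Finset.prod_Ico_succ_top (Nat.le_refl (lam.colLen 0)), Ico_self, prod_empty, one_mul,
        rowLen_eq_zero' (le_refl _)]
  | succ m ih =>
      have hab : lam.colLen (m+1) ≤ lam.colLen m := lam.colLen_anti m (m+1) (Nat.le_succ m)
      have hbL : lam.colLen m ≤ lam.colLen 0 := lam.colLen_anti 0 m (Nat.zero_le m)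
      rw [← Finset.prod_Ico_consecutive _ hab hbL,
        ← Finset.prod_Ico_consecutive _ hab (by omega : lam.colLen m ≤ lam.colLen 0 + 1),
        Finset.prod_range_succ (fun c => F c (lam.colLen c)) (m+1),
        Finset.prod_range_succ (fun c => F (c+1) (lam.colLen c)) m]
      have e1 : ∏ i ∈ Ico (lam.colLen (m+1)) (lam.colLen m), F (lam.rowLen i) (i+1)
          = ∏ i ∈ Ico (lam.colLen (m+1)) (lam.colLen m), F (m+1) (i+1) := by
        refine Finset.prod_congr rfl fun i hi => ?_
        rw [rowLen_eq_succ' (mem_Ico.mp hi).1 (mem_Ico.mp hi).2]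
      have e2 : ∏ i ∈ Ico (lam.colLen (m+1)) (lam.colLen m), F (lam.rowLen i) i
          = ∏ i ∈ Ico (lam.colLen (m+1)) (lam.colLen m), F (m+1) i := by
        refine Finset.prod_congr rfl fun i hi => ?_
        rw [rowLen_eq_succ' (mem_Ico.mp hi).1 (mem_Ico.mp hi).2]
      have tele := prod_telescope (F (m+1)) hab
      rw [e1, e2]
      linear_combination
        (F (m+1) (lam.colLen (m+1)) *
            ∏ i ∈ Ico (lam.colLen (m+1)) (lam.colLen m), F (m+1) (i+1)) * ih
        + ((∏ c ∈ range m, F (c+1) (lam.colLen c)) *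
            ∏ i ∈ Ico (lam.colLen m) (lam.colLen 0 + 1), F (lam.rowLen i) i) * tele

/-- auxiliary local factor -/
def nekF {R : Type*} [CommRing R] (n : ℕ) (q1 q3 z : Rˣ) (m j : ℕ) (x y : ℕ) : R :=
  if ((((y : ℤ) - (x : ℤ) - ((j : ℤ) - (m : ℤ)) : ℤ) : ZMod n) = 0) then
    (1 - ((z * q1 ^ ((x : ℤ) - (m : ℤ) - 1) * q3 ^ ((y : ℤ) - (j : ℤ) - 1) : Rˣ) : R)) else 1

lemma zmod_sub_iff {n : ℕ} (a b : ℤ) :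
    ((a : ZMod n) = (b : ZMod n)) ↔ (((a - b : ℤ) : ZMod n) = 0) := by
  rw [Int.cast_sub, sub_eq_zero]

lemma zmod_neg_iff {n : ℕ} (a b : ℤ) (h : a = -b) :
    (((a : ℤ) : ZMod n) = 0) ↔ (((b : ℤ) : ZMod n) = 0) := by
  rw [h, Int.cast_neg, neg_eq_zero]

/-- Recursion for the Nekrasov factor when a box of color `ℓ` is added to `μ` in
row `j` (0-based; 1-based row index `j+1`). -/
theorem nek_recursion {R : Type*} [CommRing R] (n : ℕ) (hn : 2 ≤ n)
    (q1 q3 z : Rˣ) (lam mu mu' : YoungDiagram) (j : ℕ) (ℓ : ℤ)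
    (hadd : mu'.cells = insert (j, mu.rowLen j) mu.cells)
    (hcol : (ℓ : ZMod n) = (((j : ℤ) + 1 - (mu.rowLen j : ℤ) - 1 : ℤ) : ZMod n)) :
    nek n q1 q3 z lam mu' *
      (∏ i ∈ (Finset.range (lam.colLen 0)).filter
          (fun (i : ℕ) => ((((i : ℤ) + 1 - (lam.rowLen i : ℤ) : ℤ) : ZMod n) = (ℓ : ZMod n))),
        (1 - ((z * q1 ^ ((lam.rowLen i : ℤ) - (mu.rowLen j : ℤ) - 1) *
               q3 ^ ((i : ℤ) - (j : ℤ)) : Rˣ) : R)))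
    = nek n q1 q3 z lam mu *
      (∏ i ∈ (Finset.range (lam.colLen 0 + 1)).filter
          (fun (i : ℕ) => ((((i : ℤ) + 1 - (lam.rowLen i : ℤ) : ℤ) : ZMod n) = (ℓ : ZMod n) + 1)),
        (1 - ((z * q1 ^ ((lam.rowLen i : ℤ) - (mu.rowLen j : ℤ) - 1) *
               q3 ^ ((i : ℤ) - (j : ℤ) - 1) : Rˣ) : R))) := by
  classical
  have hjm_mem' : (j, mu.rowLen j) ∈ mu' := by
    rw [← YoungDiagram.mem_cells, hadd]; exact Finset.mem_insert_self _ _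
  have hjm_not : (j, mu.rowLen j) ∉ mu := by
    rw [YoungDiagram.mem_iff_lt_rowLen]; omega
  set m := mu.rowLen j with hm
  set L := lam.colLen 0 with hL
  set r0 := lam.colLen m with hr0
  have hmemmu' : ∀ c : ℕ × ℕ, c ∈ mu' ↔ c = (j, m) ∨ c ∈ mu := by
    intro c
    rw [← YoungDiagram.mem_cells, hadd, Finset.mem_insert, YoungDiagram.mem_cells]
  have hcolm : mu.colLen m = j := by
    apply colLen_eq_of_iff
    intro i
    constructor
    · intro h
      by_contra hc
      exact hjm_not (mu.up_left_mem (by omega) le_rfl h)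
    · intro h
      rcases (hmemmu' (i, m)).mp (mu'.up_left_mem (by omega) le_rfl hjm_mem') with h1 | h1
      · exact absurd (congrArg Prod.fst h1) (by simpa using by omega)
      · exact h1
  have hrow' : ∀ i, mu'.rowLen i = if i = j then m + 1 else mu.rowLen i := by
    intro i
    split_ifs with hij
    · rw [hij]
      apply rowLen_eq_of_iff
      intro c
      rw [hmemmu' (j, c), YoungDiagram.mem_iff_lt_rowLen, ← hm, Prod.mk.injEq]
      constructor
      · rintro (⟨-, h⟩ | h) <;> omega
      · intro h
        rcases Nat.lt_or_ge c m with h1 | h1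
        · exact Or.inr h1
        · exact Or.inl ⟨rfl, by omega⟩
    · apply rowLen_eq_of_iff
      intro c
      rw [hmemmu' (i, c), YoungDiagram.mem_iff_lt_rowLen, Prod.mk.injEq]
      constructor
      · rintro (⟨h, -⟩ | h)
        · exact absurd h hij
        · exact h
      · exact fun h => Or.inr h
  have hcol' : ∀ c, mu'.colLen c = if c = m then j + 1 else mu.colLen c := by
    intro c
    split_ifs with hcm
    · rw [hcm]
      apply colLen_eq_of_iff
      intro i
      rw [hmemmu' (i, m), YoungDiagram.mem_iff_lt_colLen, hcolm, Prod.mk.injEq]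
      constructor
      · rintro (⟨h, -⟩ | h) <;> omega
      · intro h
        rcases Nat.lt_or_ge i j with h1 | h1
        · exact Or.inr h1
        · exact Or.inl ⟨by omega, rfl⟩
    · apply colLen_eq_of_iff
      intro i
      rw [hmemmu' (i, c), YoungDiagram.mem_iff_lt_colLen, Prod.mk.injEq]
      constructor
      · rintro (⟨-, h⟩ | h)
        · exact absurd h hcm
        · exact h
      · exact fun h => Or.inr h
  have hr0L : r0 ≤ L := lam.colLen_anti 0 m (Nat.zero_le m)
  set F : ℕ → ℕ → R := nekF n q1 q3 z m j with hF
  -- boundary product A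
  have hA : (∏ i ∈ (Finset.range L).filter
          (fun (i : ℕ) => ((((i : ℤ) + 1 - (lam.rowLen i : ℤ) : ℤ) : ZMod n) = (ℓ : ZMod n))),
        (1 - ((z * q1 ^ ((lam.rowLen i : ℤ) - (m : ℤ) - 1) *
               q3 ^ ((i : ℤ) - (j : ℤ)) : Rˣ) : R)))
      = (∏ i ∈ range r0, F (lam.rowLen i) (i+1)) *
        (∏ i ∈ Ico r0 L, F (lam.rowLen i) (i+1)) := by
    rw [Finset.prod_filter]
    have hterm : ∀ i : ℕ,
        (if ((((i : ℤ) + 1 - (lam.rowLen i : ℤ) : ℤ) : ZMod n) = (ℓ : ZMod n)) then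
          (1 - ((z * q1 ^ ((lam.rowLen i : ℤ) - (m : ℤ) - 1) *
                 q3 ^ ((i : ℤ) - (j : ℤ)) : Rˣ) : R)) else 1)
        = F (lam.rowLen i) (i+1) := by
      intro i
      rw [hF]
      unfold nekF
      refine if_congr ?_ ?_ rfl
      · rw [hcol, zmod_sub_iff]
        rw [show ((i : ℤ) + 1 - (lam.rowLen i : ℤ)) - ((j : ℤ) + 1 - (m : ℤ) - 1)
            = (((i+1 : ℕ) : ℤ) - (lam.rowLen i : ℤ) - ((j : ℤ) - (m : ℤ))) by push_cast; ring]
      · rw [show ((i : ℤ) - (j : ℤ)) = (((i+1 : ℕ) : ℤ) - (j : ℤ) - 1) by push_cast; ring]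
    rw [Finset.prod_congr rfl (fun i _ => hterm i), Finset.range_eq_Ico,
      ← Finset.prod_Ico_consecutive _ (Nat.zero_le r0) hr0L, ← Finset.range_eq_Ico]
  -- boundary product B
  have hB : (∏ i ∈ (Finset.range (L + 1)).filter
          (fun (i : ℕ) => ((((i : ℤ) + 1 - (lam.rowLen i : ℤ) : ℤ) : ZMod n) = (ℓ : ZMod n) + 1)),
        (1 - ((z * q1 ^ ((lam.rowLen i : ℤ) - (m : ℤ) - 1) *
               q3 ^ ((i : ℤ) - (j : ℤ) - 1) : Rˣ) : R)))
      = (∏ i ∈ range r0, F (lam.rowLen i) i) *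
        (∏ i ∈ Ico r0 (L + 1), F (lam.rowLen i) i) := by
    rw [Finset.prod_filter]
    have hterm : ∀ i : ℕ,
        (if ((((i : ℤ) + 1 - (lam.rowLen i : ℤ) : ℤ) : ZMod n) = (ℓ : ZMod n) + 1) then
          (1 - ((z * q1 ^ ((lam.rowLen i : ℤ) - (m : ℤ) - 1) *
                 q3 ^ ((i : ℤ) - (j : ℤ) - 1) : Rˣ) : R)) else 1)
        = F (lam.rowLen i) i := by
      intro i
      rw [hF]
      unfold nekF
      refine if_congr ?_ rfl rfl
      rw [hcol, show ((((j : ℤ) + 1 - (m : ℤ) - 1 : ℤ) : ZMod n) + 1)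
          = ((((j : ℤ) + 1 - (m : ℤ) : ℤ)) : ZMod n) by push_cast; ring, zmod_sub_iff]
      rw [show ((i : ℤ) + 1 - (lam.rowLen i : ℤ)) - ((j : ℤ) + 1 - (m : ℤ))
          = ((i : ℤ) - (lam.rowLen i : ℤ) - ((j : ℤ) - (m : ℤ))) by ring]
    rw [Finset.prod_congr rfl (fun i _ => hterm i), Finset.range_eq_Ico,
      ← Finset.prod_Ico_consecutive _ (Nat.zero_le r0) (by omega : r0 ≤ L + 1),
      ← Finset.range_eq_Ico]
  -- decomposition of the first (λ-side) product, for mu'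
  have hP' : (∏ s ∈ lam.cells.filter (fun s => ((relHook mu' lam s : ZMod n) = 0)),
        (1 - ((z * q1 ^ armZ lam s * q3 ^ (-legZ mu' s - 1) : Rˣ) : R)))
      = (∏ i ∈ range r0, F (lam.rowLen i) i) *
        (∏ s ∈ lam.cells.filter (fun s => ¬ s.2 = m),
          (if ((relHook mu lam s : ZMod n) = 0) then
            (1 - ((z * q1 ^ armZ lam s * q3 ^ (-legZ mu s - 1) : Rˣ) : R)) else 1)) := by
    rw [Finset.prod_filter,
      ← Finset.prod_filter_mul_prod_filter_not lam.cells (fun s => s.2 = m)]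
    congr 1
    · rw [show lam.cells.filter (fun s => s.2 = m) = lam.col m from rfl,
        YoungDiagram.col_eq_prod, Finset.prod_product, ← hr0]
      refine Finset.prod_congr rfl fun i _ => ?_
      rw [Finset.prod_singleton]
      simp only [relHook, armZ, legZ]
      simp only [hcol' m, ↓reduceIte, hF]
      unfold nekF
      refine if_congr ?_ ?_ rfl
      · exact zmod_neg_iff _ _ (by push_cast; ring)
      · rw [show (-(((j : ℕ) + 1 : ℕ) - (i : ℤ) - 1) - 1 : ℤ)
            = ((i : ℤ) - (j : ℤ) - 1) by push_cast; ring]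
    · refine Finset.prod_congr rfl fun s hs => ?_
      have hs2 : ¬ s.2 = m := (Finset.mem_filter.mp hs).2
      simp only [relHook, armZ, legZ]
      simp only [hcol' s.2, if_neg hs2]
      rfl
  -- decomposition of the first (λ-side) product, for mu
  have hP : (∏ s ∈ lam.cells.filter (fun s => ((relHook mu lam s : ZMod n) = 0)),
        (1 - ((z * q1 ^ armZ lam s * q3 ^ (-legZ mu s - 1) : Rˣ) : R)))
      = (∏ i ∈ range r0, F (lam.rowLen i) (i+1)) *
        (∏ s ∈ lam.cells.filter (fun s => ¬ s.2 = m),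
          (if ((relHook mu lam s : ZMod n) = 0) then
            (1 - ((z * q1 ^ armZ lam s * q3 ^ (-legZ mu s - 1) : Rˣ) : R)) else 1)) := by
    rw [Finset.prod_filter,
      ← Finset.prod_filter_mul_prod_filter_not lam.cells (fun s => s.2 = m)]
    congr 1
    rw [show lam.cells.filter (fun s => s.2 = m) = lam.col m from rfl,
      YoungDiagram.col_eq_prod, Finset.prod_product, ← hr0]
    refine Finset.prod_congr rfl fun i _ => ?_
    rw [Finset.prod_singleton]
    simp only [relHook, armZ, legZ]
    simp only [hcolm, hF]
    unfold nekF
    refine if_congr ?_ ?_ rfl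
    · exact zmod_neg_iff _ _ (by push_cast; ring)
    · rw [show (-((j : ℤ) - (i : ℤ) - 1) - 1 : ℤ)
          = (((i + 1 : ℕ) : ℤ) - (j : ℤ) - 1) by push_cast; ring]
  -- decomposition of the second (μ-side) product, for mu'
  have hQ' : (∏ t ∈ mu'.cells.filter (fun t => ((relHook lam mu' t : ZMod n) = 0)),
        (1 - ((z * q1 ^ (-armZ mu' t - 1) * q3 ^ legZ lam t : Rˣ) : R)))
      = (∏ c ∈ range (m+1), F c (lam.colLen c)) *
        (∏ t ∈ mu.cells.filter (fun t => ¬ t.1 = j),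
          (if ((relHook lam mu t : ZMod n) = 0) then
            (1 - ((z * q1 ^ (-armZ mu t - 1) * q3 ^ legZ lam t : Rˣ) : R)) else 1)) := by
    rw [Finset.prod_filter,
      ← Finset.prod_filter_mul_prod_filter_not mu'.cells (fun t => t.1 = j)]
    congr 1
    · rw [show mu'.cells.filter (fun t => t.1 = j) = mu'.row j from rfl,
        YoungDiagram.row_eq_prod, hrow' j, if_pos rfl, Finset.prod_product,
        Finset.prod_singleton]
      refine Finset.prod_congr rfl fun c _ => ?_
      simp only [relHook, armZ, legZ]
      simp only [hrow' j, ↓reduceIte, hF]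
      unfold nekF
      refine if_congr ?_ ?_ rfl
      · rw [show ((((m : ℕ) + 1 : ℕ) : ℤ) - (c : ℤ) - 1 + ((lam.colLen c : ℤ) - (j : ℤ) - 1) + 1 : ℤ)
            = ((lam.colLen c : ℤ) - (c : ℤ) - ((j : ℤ) - (m : ℤ))) by push_cast; ring]
      · rw [show (-((((m : ℕ) + 1 : ℕ) : ℤ) - (c : ℤ) - 1) - 1 : ℤ)
            = ((c : ℤ) - (m : ℤ) - 1) by push_cast; ring]
    · have hsets : mu'.cells.filter (fun t => ¬ t.1 = j)
          = mu.cells.filter (fun t => ¬ t.1 = j) := by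
        ext t
        simp only [Finset.mem_filter, YoungDiagram.mem_cells]
        constructor
        · rintro ⟨h1, h2⟩
          rcases (hmemmu' t).mp h1 with h3 | h3
          · exact absurd (congrArg Prod.fst h3) h2
          · exact ⟨h3, h2⟩
        · rintro ⟨h1, h2⟩
          exact ⟨(hmemmu' t).mpr (Or.inr h1), h2⟩
      rw [hsets]
      refine Finset.prod_congr rfl fun t ht => ?_
      have ht2 : ¬ t.1 = j := (Finset.mem_filter.mp ht).2
      simp only [relHook, armZ, legZ]
      simp only [hrow' t.1, if_neg ht2]
      rfl
  -- decomposition of the second (μ-side) product, for mu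
  have hQ : (∏ t ∈ mu.cells.filter (fun t => ((relHook lam mu t : ZMod n) = 0)),
        (1 - ((z * q1 ^ (-armZ mu t - 1) * q3 ^ legZ lam t : Rˣ) : R)))
      = (∏ c ∈ range m, F (c+1) (lam.colLen c)) *
        (∏ t ∈ mu.cells.filter (fun t => ¬ t.1 = j),
          (if ((relHook lam mu t : ZMod n) = 0) then
            (1 - ((z * q1 ^ (-armZ mu t - 1) * q3 ^ legZ lam t : Rˣ) : R)) else 1)) := by
    rw [Finset.prod_filter,
      ← Finset.prod_filter_mul_prod_filter_not mu.cells (fun t => t.1 = j)]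
    congr 1
    rw [show mu.cells.filter (fun t => t.1 = j) = mu.row j from rfl,
      YoungDiagram.row_eq_prod, ← hm, Finset.prod_product, Finset.prod_singleton]
    refine Finset.prod_congr rfl fun c _ => ?_
    simp only [relHook, armZ, legZ]
    simp only [← hm, hF]
    unfold nekF
    refine if_congr ?_ ?_ rfl
    · rw [show ((m : ℤ) - (c : ℤ) - 1 + ((lam.colLen c : ℤ) - (j : ℤ) - 1) + 1 : ℤ)
          = ((lam.colLen c : ℤ) - (((c : ℕ) + 1 : ℕ) : ℤ) - ((j : ℤ) - (m : ℤ))) by push_cast; ring]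
    · rw [show (-((m : ℤ) - (c : ℤ) - 1) - 1 : ℤ)
          = ((((c : ℕ) + 1 : ℕ) : ℤ) - (m : ℤ) - 1) by push_cast; ring]
  have hkey := key_prod F lam m
  rw [← hr0, ← hL] at hkey
  simp only [nek]
  rw [hP', hQ', hP, hQ, hA, hB]
  linear_combination ((∏ s ∈ lam.cells.filter (fun s => ¬ s.2 = m),
      (if ((relHook mu lam s : ZMod n) = 0) then
        (1 - ((z * q1 ^ armZ lam s * q3 ^ (-legZ mu s - 1) : Rˣ) : R)) else 1)) *
    (∏ t ∈ mu.cells.filter (fun t => ¬ t.1 = j),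
      (if ((relHook lam mu t : ZMod n) = 0) then
        (1 - ((z * q1 ^ (-armZ mu t - 1) * q3 ^ legZ lam t : Rˣ) : R)) else 1)) *
    (∏ i ∈ range r0, F (lam.rowLen i) (i+1)) *
    (∏ i ∈ range r0, F (lam.rowLen i) i)) * hkey
end

section
/- Let n ≥ 1 and let 𝔮, q1, q3, x be invertible elements of a commutative ring satisfying 𝔮² q1 q3 = 1. Then for all Young diagrams λ, μ: N_{λμ}(𝔮^{−1}x; q1, q3) = ∏_{s∈λ, h_{μ,λ}(s)≡0 (mod n)} (−𝔮^{−1} q1^{a_λ(s)} q3^{−ℓ_μ(s)−1} x) · ∏_{t∈μ, h_{λ,μ}(t)≡0 (mod n)} (−𝔮^{−1} q1^{−a_μ(t)−1} q3^{ℓ_λ(t)} x) · N_{μλ}(𝔮^{−1}x^{−1}; q1, q3). -/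
open Finset

/-! Every factor `1 - u` of a Nekrasov factor equals `-u * (1 - u⁻¹)`. Under `𝔮² q₁ q₃ = 1` the
inverse of `𝔮⁻¹ x q₁^a q₃^b` is `𝔮⁻¹ x⁻¹ q₁^(-a-1) q₃^(-b-1)`, and this reflection of the arm and
leg exponents turns each product of `N_{λμ}(𝔮⁻¹x)` into the matching product of `N_{μλ}(𝔮⁻¹x⁻¹)`. -/

theorem Units.one_sub_val_eq_neg_mul {R : Type*} [CommRing R] (u : Rˣ) :
    (1 : R) - u = -u * (1 - ↑u⁻¹) := by
  linear_combination -u.mul_inv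

theorem inv_mul_zpow_mul_zpow {G : Type*} [CommGroup G] {qq q1 q3 : G}
    (hq : qq ^ 2 * q1 * q3 = 1) (x : G) {a a' b b' : ℤ}
    (ha : a + a' = -1) (hb : b + b' = -1) :
    (qq⁻¹ * x * q1 ^ a * q3 ^ b)⁻¹ = qq⁻¹ * x⁻¹ * q1 ^ a' * q3 ^ b' := by
  rw [inv_eq_iff_mul_eq_one]
  calc qq⁻¹ * x * q1 ^ a * q3 ^ b * (qq⁻¹ * x⁻¹ * q1 ^ a' * q3 ^ b')
      = x * x⁻¹ * ((qq ^ 2)⁻¹ * q1 ^ (a + a') * q3 ^ (b + b')) := by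
        rw [zpow_add, zpow_add, pow_two, mul_inv]
        simp only [mul_comm, mul_left_comm, mul_assoc]
    _ = 1 := by
        rw [mul_inv_cancel, one_mul, ha, hb, zpow_neg_one, zpow_neg_one, ← mul_inv, ← mul_inv, hq,
          inv_one]

theorem prod_one_sub_monomial {R ι : Type*} [CommRing R] {qq q1 q3 : Rˣ}
    (hq : qq ^ 2 * q1 * q3 = 1) (x : Rˣ) (S : Finset ι) (a b a' b' : ι → ℤ)
    (ha : ∀ s, a s + a' s = -1) (hb : ∀ s, b s + b' s = -1) :
    ∏ s ∈ S, (1 - ((qq⁻¹ * x * q1 ^ a s * q3 ^ b s : Rˣ) : R))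
      = (∏ s ∈ S, -((qq⁻¹ * q1 ^ a s * q3 ^ b s * x : Rˣ) : R)) *
        ∏ s ∈ S, (1 - ((qq⁻¹ * x⁻¹ * q1 ^ a' s * q3 ^ b' s : Rˣ) : R)) := by
  rw [← prod_mul_distrib]
  refine prod_congr rfl fun s _ => ?_
  rw [Units.one_sub_val_eq_neg_mul, inv_mul_zpow_mul_zpow hq x (ha s) (hb s), mul_right_comm _ x,
    mul_right_comm _ x]

theorem nek_symmetry_general {R : Type*} [CommRing R] (n : ℕ)
    (qq q1 q3 x : Rˣ) (hq : qq ^ 2 * q1 * q3 = 1) (lam mu : YoungDiagram) :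
    nek n q1 q3 (qq⁻¹ * x) lam mu
    = (∏ s ∈ lam.cells.filter (fun s => ((relHook mu lam s : ZMod n) = 0)),
        (-((qq⁻¹ * q1 ^ armZ lam s * q3 ^ (-legZ mu s - 1) * x : Rˣ) : R))) *
      (∏ t ∈ mu.cells.filter (fun t => ((relHook lam mu t : ZMod n) = 0)),
        (-((qq⁻¹ * q1 ^ (-armZ mu t - 1) * q3 ^ legZ lam t * x : Rˣ) : R))) *
      nek n q1 q3 (qq⁻¹ * x⁻¹) mu lam := by
  unfold nek
  rw [prod_one_sub_monomial hq x _ (armZ lam) (fun s => -legZ mu s - 1) (fun s => -armZ lam s - 1)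
      (legZ mu) (fun _ => by ring) (fun _ => by ring),
    prod_one_sub_monomial hq x _ (fun t => -armZ mu t - 1) (legZ lam) (armZ mu)
      (fun t => -legZ lam t - 1) (fun _ => by ring) (fun _ => by ring)]
  ring

/-- Symmetry of the Nekrasov factor on the ALE space (combinatorial core of Lemma 6):
`N_{λμ}(𝔮⁻¹x) = ∏_{s∈λ,h_{μ,λ}(s)≡0} (-𝔮⁻¹ q1^{a_λ(s)} q3^{-ℓ_μ(s)-1} x) ·
 ∏_{t∈μ,h_{λ,μ}(t)≡0} (-𝔮⁻¹ q1^{-a_μ(t)-1} q3^{ℓ_λ(t)} x) · N_{μλ}(𝔮⁻¹x⁻¹)`,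
under the constraint `𝔮² q1 q3 = 1`. -/
theorem nek_symmetry {R : Type*} [CommRing R] (n : ℕ) (hn : 1 ≤ n)
    (qq q1 q3 x : Rˣ) (hq : qq ^ 2 * q1 * q3 = 1) (lam mu : YoungDiagram) :
    nek n q1 q3 (qq⁻¹ * x) lam mu
    = (∏ s ∈ lam.cells.filter (fun s => ((relHook mu lam s : ZMod n) = 0)),
        (-((qq⁻¹ * q1 ^ armZ lam s * q3 ^ (-legZ mu s - 1) * x : Rˣ) : R))) *
      (∏ t ∈ mu.cells.filter (fun t => ((relHook lam mu t : ZMod n) = 0)),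
        (-((qq⁻¹ * q1 ^ (-armZ mu t - 1) * q3 ^ legZ lam t * x : Rˣ) : R))) *
      nek n q1 q3 (qq⁻¹ * x⁻¹) mu lam :=
  nek_symmetry_general n qq q1 q3 x hq lam mu
end

section
/- Let n ≥ 1 and let 𝔮, q1, q3, z be invertible elements of a commutative ring satisfying 𝔮² q1 q3 = 1. For Young diagrams λ, μ set H(λ,μ) := #{s ∈ λ : h_{μ,λ}(s) ≡ 0 (mod n)} + #{t ∈ μ : h_{λ,μ}(t) ≡ 0 (mod n)}. Then N_{λμ}(z) · N_{μλ}(z^{−1}) = 𝔮^{2H(λ,μ)} · N_{λμ}(𝔮^{−2}z) · N_{μλ}(𝔮^{−2}z^{−1}); equivalently, the diagonal R-matrix R_{λμ}(z) := 𝔮^{−H(λ,μ)} N_{λμ}(z)/N_{λμ}(𝔮^{−2}z) satisfies the unitarity relation R_{λμ}(z) R_{μλ}(z^{−1}) = 1 (as an identity of rational functions). -/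
open Finset

/-- `H(λ,μ) = #{s∈λ : h_{μ,λ}(s) ≡ 0 (mod n)} + #{t∈μ : h_{λ,μ}(t) ≡ 0 (mod n)}`. -/
def Hcount (n : ℕ) (lam mu : YoungDiagram) : ℕ :=
  (lam.cells.filter (fun s => ((relHook mu lam s : ZMod n) = 0))).card +
  (mu.cells.filter (fun t => ((relHook lam mu t : ZMod n) = 0))).card

/-!
The two Nekrasov factors on the left pair up cell by cell: a cell `s ∈ λ` with
`h_{μ,λ}(s) ≡ 0` contributes `1 - z u` to `N_{λμ}(z)` and `1 - z⁻¹ v` to `N_{μλ}(z⁻¹)`, where the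
monomials satisfy `u v = (q1 q3)⁻¹ = 𝔮²`, and symmetrically for the cells of `μ`. For units with
`u v = c` one has `(1 - z u)(1 - z⁻¹ v) = c (1 - c⁻¹ z u)(1 - c⁻¹ z⁻¹ v)`, and the `H(λ,μ)`
pairs contribute the prefactor `𝔮^{2H(λ,μ)}`.
-/

theorem Finset.prod_mul_prod_eq_pow_card_mul {ι M : Type*} [CommMonoid M] (s : Finset ι)
    (b : M) (f g f' g' : ι → M) (h : ∀ i ∈ s, f i * g i = b * (f' i * g' i)) :
    (∏ i ∈ s, f i) * (∏ i ∈ s, g i) = b ^ #s * ((∏ i ∈ s, f' i) * (∏ i ∈ s, g' i)) := by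
  rw [← prod_mul_distrib, prod_congr rfl h, prod_mul_distrib, prod_const, prod_mul_distrib]

section NekrasovCell

variable {R : Type*} [CommRing R]

theorem Units.one_sub_mul_one_sub_inv_mul (z u v : Rˣ) :
    (1 - ((z * u : Rˣ) : R)) * (1 - ((z⁻¹ * v : Rˣ) : R))
      = ((u * v : Rˣ) : R) *
        ((1 - (((u * v)⁻¹ * z * u : Rˣ) : R)) * (1 - (((u * v)⁻¹ * z⁻¹ * v : Rˣ) : R))) := by
  have hz : (z : R) * ((z⁻¹ : Rˣ) : R) = 1 := z.mul_inv
  have huv : (u : R) * v * (((u * v)⁻¹ : Rˣ) : R) = 1 := by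
    rw [← Units.val_mul, ← Units.val_mul, mul_inv_cancel, Units.val_one]
  simp only [Units.val_mul]
  linear_combination (u * v - 1) * hz +
    (z * u + (z⁻¹ : Rˣ) * v - ((u * v * (((u * v)⁻¹ : Rˣ) : R)) + 1) * z * (z⁻¹ : Rˣ)) * huv

theorem one_sub_monomial_mul_one_sub_inv_monomial (qq q1 q3 z : Rˣ) (hq : qq ^ 2 * q1 * q3 = 1)
    {a b c d : ℤ} (hac : a + c = -1) (hbd : b + d = -1) :
    (1 - ((z * q1 ^ a * q3 ^ b : Rˣ) : R)) * (1 - ((z⁻¹ * q1 ^ c * q3 ^ d : Rˣ) : R))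
      = ((qq ^ 2 : Rˣ) : R) *
        ((1 - ((qq ^ (-2 : ℤ) * z * q1 ^ a * q3 ^ b : Rˣ) : R)) *
          (1 - ((qq ^ (-2 : ℤ) * z⁻¹ * q1 ^ c * q3 ^ d : Rˣ) : R))) := by
  have hmon : q1 ^ a * q3 ^ b * (q1 ^ c * q3 ^ d) = qq ^ 2 := by
    rw [mul_mul_mul_comm, ← zpow_add, ← zpow_add, hac, hbd, zpow_neg_one, zpow_neg_one,
      ← mul_inv, inv_eq_of_mul_eq_one_left (by rw [← mul_assoc, hq])]
  have hinv : qq ^ (-2 : ℤ) = (qq ^ 2)⁻¹ := zpow_neg_coe_of_pos qq two_pos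
  simpa only [mul_assoc, hmon, hinv] using
    Units.one_sub_mul_one_sub_inv_mul z (q1 ^ a * q3 ^ b) (q1 ^ c * q3 ^ d)

end NekrasovCell

theorem nek_unitarity_general {R : Type*} [CommRing R] (n : ℕ)
    (qq q1 q3 z : Rˣ) (hq : qq ^ 2 * q1 * q3 = 1) (lam mu : YoungDiagram) :
    nek n q1 q3 z lam mu * nek n q1 q3 z⁻¹ mu lam
    = ((qq ^ (2 * Hcount n lam mu) : Rˣ) : R) *
        nek n q1 q3 (qq ^ (-2 : ℤ) * z) lam mu *
        nek n q1 q3 (qq ^ (-2 : ℤ) * z⁻¹) mu lam := by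
  have hlam := prod_mul_prod_eq_pow_card_mul _ _ _ _ _ _ fun s (_ : s ∈ lam.cells.filter
      (fun s => ((relHook mu lam s : ZMod n) = 0))) =>
    one_sub_monomial_mul_one_sub_inv_monomial qq q1 q3 z hq
      (a := armZ lam s) (b := -legZ mu s - 1) (c := -armZ lam s - 1) (d := legZ mu s) (by ring)
      (by ring)
  have hmu := prod_mul_prod_eq_pow_card_mul _ _ _ _ _ _ fun t (_ : t ∈ mu.cells.filter
      (fun t => ((relHook lam mu t : ZMod n) = 0))) =>
    one_sub_monomial_mul_one_sub_inv_monomial qq q1 q3 z hq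
      (a := -armZ mu t - 1) (b := legZ lam t) (c := armZ mu t) (d := -legZ lam t - 1) (by ring)
      (by ring)
  simp only [nek, Hcount]
  rw [pow_mul, Units.val_pow_eq_pow_val, pow_add,
    show ∀ A B B' A' : R, A * B * (B' * A') = A * A' * (B * B') from fun _ _ _ _ => by ring,
    hlam, hmu]
  ring

/-- Unitarity of the diagonal R-matrix:
`N_{λμ}(z) N_{μλ}(z⁻¹) = 𝔮^{2H(λ,μ)} N_{λμ}(𝔮⁻²z) N_{μλ}(𝔮⁻²z⁻¹)`,
under the constraint `𝔮² q1 q3 = 1`; equivalently,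
`R_{λμ}(z) = 𝔮^{-H(λ,μ)} N_{λμ}(z)/N_{λμ}(𝔮⁻²z)` satisfies `R_{λμ}(z) R_{μλ}(z⁻¹) = 1`. -/
theorem nek_unitarity {R : Type*} [CommRing R] (n : ℕ) (hn : 1 ≤ n)
    (qq q1 q3 z : Rˣ) (hq : qq ^ 2 * q1 * q3 = 1) (lam mu : YoungDiagram) :
    nek n q1 q3 z lam mu * nek n q1 q3 z⁻¹ mu lam
    = ((qq ^ (2 * Hcount n lam mu) : Rˣ) : R) *
        nek n q1 q3 (qq ^ (-2 : ℤ) * z) lam mu *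
        nek n q1 q3 (qq ^ (-2 : ℤ) * z⁻¹) mu lam :=
  nek_unitarity_general n qq q1 q3 z hq lam mu
end

section
/- Let n ≥ 1 and let q1, q3, z be invertible elements of a commutative ring. For every Young diagram λ, ∏_{(i,j)∈λ, i ≡ j (mod n)} (1 − z q1^{j−1} q3^{i−1}) = N_{λ∅}(z; q1, q3), i.e. the product over boxes of color 0 equals ∏_{(i,j)∈λ, λ_i−j−i+1 ≡ 0 (mod n)} (1 − z q1^{λ_i−j} q3^{i−1}). -/
open Finset

/-! Reversing each row, `(i, j) ↦ (i, λ_i - 1 - j)`, is an involution of the cells of `λ` that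
turns the column index `j` into the arm length and, since every leg relative to `∅` is `-i - 1`,
turns the color `j - i` into the relative hook length `h_{∅,λ}`. -/

theorem YoungDiagram.colLen_bot (j : ℕ) : (⊥ : YoungDiagram).colLen j = 0 :=
  Nat.eq_zero_of_not_pos fun h => notMem_bot _ (mem_iff_lt_colLen.mpr h)

theorem legZ_bot (c : ℕ × ℕ) : legZ ⊥ c = -(c.1 : ℤ) - 1 := by
  simp [legZ, YoungDiagram.colLen_bot]

theorem relHook_bot_left (μ : YoungDiagram) (c : ℕ × ℕ) : relHook ⊥ μ c = armZ μ c - c.1 := by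
  rw [relHook, legZ_bot]
  ring

theorem nek_bot_right {R : Type*} [CommRing R] (n : ℕ) (q1 q3 z : Rˣ) (μ : YoungDiagram) :
    nek n q1 q3 z μ ⊥ = ∏ s ∈ μ.cells.filter (fun s => ((relHook ⊥ μ s : ZMod n) = 0)),
      (1 - ((z * q1 ^ armZ μ s * q3 ^ (s.1 : ℤ) : Rˣ) : R)) := by
  simp [nek, YoungDiagram.cells_bot, legZ_bot]

def rowReflect (μ : YoungDiagram) (c : ℕ × ℕ) : ℕ × ℕ := (c.1, μ.rowLen c.1 - 1 - c.2)

section rowReflect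

variable {μ : YoungDiagram} {c : ℕ × ℕ}

@[simp]
theorem rowReflect_fst : (rowReflect μ c).1 = c.1 := rfl

theorem rowReflect_mem (h : c ∈ μ) : rowReflect μ c ∈ μ := by
  rw [← Prod.mk.eta (p := c), YoungDiagram.mem_iff_lt_rowLen] at h
  rw [rowReflect, YoungDiagram.mem_iff_lt_rowLen]
  omega

theorem rowReflect_rowReflect (h : c ∈ μ) : rowReflect μ (rowReflect μ c) = c := by
  rw [← Prod.mk.eta (p := c), YoungDiagram.mem_iff_lt_rowLen] at h
  refine Prod.ext rfl ?_
  simp only [rowReflect]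
  omega

theorem rowReflect_coe_snd (h : c ∈ μ) :
    ((rowReflect μ c).2 : ℤ) = μ.rowLen c.1 - 1 - c.2 := by
  rw [← Prod.mk.eta (p := c), YoungDiagram.mem_iff_lt_rowLen] at h
  simp only [rowReflect]
  omega

theorem armZ_rowReflect (h : c ∈ μ) : armZ μ (rowReflect μ c) = c.2 := by
  rw [armZ, rowReflect_coe_snd h, rowReflect_fst]
  ring

theorem relHook_bot_rowReflect (h : c ∈ μ) :
    relHook ⊥ μ (rowReflect μ c) = (c.2 : ℤ) - c.1 := by
  rw [relHook_bot_left, armZ_rowReflect h]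
  rfl

theorem relHook_bot_rowReflect_eq_zero_iff (n : ℕ) (h : c ∈ μ) :
    ((relHook ⊥ μ (rowReflect μ c) : ℤ) : ZMod n) = 0 ↔ (c.1 : ZMod n) = c.2 := by
  rw [relHook_bot_rowReflect h, Int.cast_sub, sub_eq_zero, eq_comm]
  push_cast
  rfl

end rowReflect

theorem color_zero_prod_eq_nek_empty_general {R : Type*} [CommRing R] (n : ℕ)
    (q1 q3 z : Rˣ) (lam : YoungDiagram) :
    (∏ c ∈ lam.cells.filter (fun c => ((c.1 : ZMod n) = (c.2 : ZMod n))),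
      (1 - ((z * q1 ^ (c.2 : ℤ) * q3 ^ (c.1 : ℤ) : Rˣ) : R)))
    = nek n q1 q3 z lam ⊥ := by
  rw [nek_bot_right]
  refine prod_nbij' (rowReflect lam) (rowReflect lam) ?_ ?_ ?_ ?_ ?_ <;>
    simp only [mem_filter, YoungDiagram.mem_cells, and_imp]
  · intro c hc hcolor
    exact ⟨rowReflect_mem hc, (relHook_bot_rowReflect_eq_zero_iff n hc).mpr hcolor⟩
  · intro c hc hhook
    refine ⟨rowReflect_mem hc, ?_⟩
    rwa [← relHook_bot_rowReflect_eq_zero_iff n (rowReflect_mem hc), rowReflect_rowReflect hc]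
  · exact fun c hc _ => rowReflect_rowReflect hc
  · exact fun c hc _ => rowReflect_rowReflect hc
  · intro c hc _
    rw [armZ_rowReflect hc, rowReflect_fst]

/-- The product over the boxes of color `0` of `λ` (boxes `(i,j)` with `i ≡ j (mod n)`
in 1-based coordinates; the factor for the box `(i,j)` is `1 - z q1^{j-1} q3^{i-1}`)
equals the vacuum Nekrasov factor `N_{λ∅}(z; q1, q3)`. -/
theorem color_zero_prod_eq_nek_empty {R : Type*} [CommRing R] (n : ℕ) (hn : 1 ≤ n)
    (q1 q3 z : Rˣ) (lam : YoungDiagram) :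
    (∏ c ∈ lam.cells.filter (fun c => ((c.1 : ZMod n) = (c.2 : ZMod n))),
      (1 - ((z * q1 ^ (c.2 : ℤ) * q3 ^ (c.1 : ℤ) : Rˣ) : R)))
    = nek n q1 q3 z lam ⊥ :=
  color_zero_prod_eq_nek_empty_general n q1 q3 z lam
end

section
/- Let n ≥ 2, fix a vacuum charge k ∈ ℤ and a color ℓ ∈ ℤ, and let λ be a Young diagram. Work in the field F = ℚ(𝔮, q1, w) of rational functions in independent indeterminates, with q3 := 𝔮^{−2} q1^{−1}, x_s := q1^{λ_s−1} q3^{s−1}, and ψ(u) := (𝔮 − 𝔮^{−1}u)/(1 − u). Then for every integer M ≥ ℓ(λ): ∏_{1≤s≤M, λ_s+ℓ ≡ s+k (mod n)} ψ(x_s w) · ∏_{1≤s≤M+1, λ_s+ℓ+1 ≡ s+k (mod n)} ψ(q3^{−1} x_s w)^{−1} = ∏_{s : (s,λ_s) ∈ R_ℓ^{(k)}(λ)} ψ(x_s w) · ∏_{s : (s,λ_s+1) ∈ A_ℓ^{(k)}(λ)} ψ(q3^{−1} x_s w)^{−1}; in particular the left-hand side is independent of M ≥ ℓ(λ). -/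
/-!
Pair the factor `ψ(x_s w)` of row `s` with the factor `ψ(q3⁻¹ x_{s+1} w)⁻¹` of row `s + 1`.
If the two rows have the same length, their colour conditions coincide and `q3⁻¹ x_{s+1} = x_s`,
so the pair cancels; this removes every row beyond `ℓ(λ)` and every row without a corner.
If `λ_{s+1} < λ_s`, the last box of row `s` is a removable corner and the box after row `s + 1`
an addable one, and the two colour conditions are exactly the corners' colour conditions.
The one unpaired factor, that of the first row, is the addable corner at the end of the first row.
The cancellation needs `ψ(x_s w) ≠ 0`, i.e. `x_s w ∉ {1, 𝔮²}`, which holds because `w` is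
independent of `𝔮` and `q1`.
-/

open Finset

noncomputable section

/-- The field `ℚ(𝔮, q1, w)` of rational functions in three independent indeterminates. -/
abbrev RatField : Type := FractionRing (MvPolynomial (Fin 3) ℚ)

/-- The indeterminate `𝔮`. -/
def qq : RatField := algebraMap (MvPolynomial (Fin 3) ℚ) RatField (MvPolynomial.X 0)

/-- The indeterminate `q1`. -/
def qone : RatField := algebraMap (MvPolynomial (Fin 3) ℚ) RatField (MvPolynomial.X 1)

/-- The indeterminate `w`. -/
def ww : RatField := algebraMap (MvPolynomial (Fin 3) ℚ) RatField (MvPolynomial.X 2)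

/-- `q3 := 𝔮⁻² q1⁻¹`. -/
def qthree : RatField := qq ^ (-2 : ℤ) * qone⁻¹

/-- `ψ(u) = (𝔮 - 𝔮⁻¹ u)/(1 - u)`. -/
def psi (u : RatField) : RatField := (qq - qq⁻¹ * u) / (1 - u)

/-- `x_s := q1^{λ_s - 1} q3^{s - 1}` (here `s` is the 0-based row index, so the
1-based row index is `s+1`). -/
def xvar (lam : YoungDiagram) (s : ℕ) : RatField :=
  qone ^ ((lam.rowLen s : ℤ) - 1) * qthree ^ (s : ℤ)

lemma X_zero_pow_mul_X_one_pow_mul_X_two_ne (a b c d : ℕ) :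
    (MvPolynomial.X 0 ^ a * MvPolynomial.X 1 ^ b * MvPolynomial.X 2 : MvPolynomial (Fin 3) ℚ) ≠
      MvPolynomial.X 0 ^ c * MvPolynomial.X 1 ^ d := by
  intro h
  have := congrArg (MvPolynomial.eval ![1, 1, 2]) h
  simp at this

lemma qq_ne_zero : qq ≠ 0 :=
  IsFractionRing.to_map_ne_zero_of_mem_nonZeroDivisors
    (mem_nonZeroDivisors_of_ne_zero (MvPolynomial.X_ne_zero _))

lemma qone_ne_zero : qone ≠ 0 :=
  IsFractionRing.to_map_ne_zero_of_mem_nonZeroDivisors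
    (mem_nonZeroDivisors_of_ne_zero (MvPolynomial.X_ne_zero _))

lemma qq_zpow_mul_qone_zpow_mul_ww_ne (α β γ : ℤ) : qq ^ α * qone ^ β * ww ≠ qq ^ γ := by
  intro h
  obtain ⟨a, c, hac⟩ : ∃ a c : ℕ, α - γ = a - c :=
    ⟨(α - γ).toNat, (γ - α).toNat, by omega⟩
  obtain ⟨b, d, hbd⟩ : ∃ b d : ℕ, β = b - d := ⟨β.toNat, (-β).toNat, by omega⟩
  have h1 : qq ^ (α - γ) * qone ^ β * ww = 1 := by
    rw [zpow_sub₀ qq_ne_zero, ← div_self (zpow_ne_zero γ qq_ne_zero), ← h]; ring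
  rw [hac, hbd, zpow_sub₀ qq_ne_zero, zpow_sub₀ qone_ne_zero] at h1
  simp only [zpow_natCast] at h1
  apply X_zero_pow_mul_X_one_pow_mul_X_two_ne a b c d
  apply IsFractionRing.injective (MvPolynomial (Fin 3) ℚ) RatField
  simp only [map_mul, map_pow]
  change qq ^ a * qone ^ b * ww = qq ^ c * qone ^ d
  field_simp at h1
  rwa [div_eq_one_iff_eq (by simp [qq_ne_zero, qone_ne_zero])] at h1

lemma psi_ne_zero {u : RatField} (h1 : u ≠ 1) (h2 : u ≠ qq ^ (2 : ℤ)) : psi u ≠ 0 := by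
  refine div_ne_zero (fun h => h2 ?_) (sub_ne_zero.2 h1.symm)
  field_simp [qq_ne_zero] at h ⊢
  linear_combination -h

lemma qthree_ne_zero : qthree ≠ 0 :=
  mul_ne_zero (zpow_ne_zero _ qq_ne_zero) (inv_ne_zero qone_ne_zero)

lemma xvar_eq_zpow (lam : YoungDiagram) (s : ℕ) :
    xvar lam s = qq ^ (-2 * s : ℤ) * qone ^ ((lam.rowLen s : ℤ) - 1 - s) := by
  rw [xvar, qthree, mul_zpow, ← zpow_mul, ← zpow_neg_one, ← zpow_mul, mul_left_comm,
    ← zpow_add₀ qone_ne_zero]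
  ring_nf

lemma psi_xvar_mul_ww_ne_zero (lam : YoungDiagram) (s : ℕ) : psi (xvar lam s * ww) ≠ 0 := by
  rw [xvar_eq_zpow]
  exact psi_ne_zero (by rw [← zpow_zero qq]; exact qq_zpow_mul_qone_zpow_mul_ww_ne _ _ 0)
    (qq_zpow_mul_qone_zpow_mul_ww_ne _ _ 2)

lemma inv_qthree_mul_xvar_succ {lam : YoungDiagram} {s : ℕ}
    (h : lam.rowLen (s + 1) = lam.rowLen s) :
    qthree⁻¹ * xvar lam (s + 1) = xvar lam s := by
  rw [xvar, xvar, h, Nat.cast_succ, zpow_add_one₀ qthree_ne_zero]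
  field_simp [qthree_ne_zero]

namespace YoungDiagram

variable (μ : YoungDiagram)

lemma mk_rowLen_notMem_cells (i : ℕ) : (i, μ.rowLen i) ∉ μ.cells := by
  simp [mem_iff_lt_rowLen]

lemma mk_rowLen_sub_one_mem_cells {i : ℕ} (hi : 0 < μ.rowLen i) :
    (i, μ.rowLen i - 1) ∈ μ.cells := by
  simp [mem_iff_lt_rowLen, hi]

lemma rowLen_eq_zero_of_colLen_le {i : ℕ} (hi : μ.colLen 0 ≤ i) : μ.rowLen i = 0 :=
  Nat.eq_zero_of_not_pos fun h => hi.not_gt (mem_iff_lt_colLen.1 (mem_iff_lt_rowLen.2 h))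

lemma isLowerSet_insert_mk_rowLen_iff (i : ℕ) :
    IsLowerSet (↑(insert (i, μ.rowLen i) μ.cells) : Set (ℕ × ℕ)) ↔
      ∀ t < i, μ.rowLen i < μ.rowLen t := by
  constructor
  · intro h t ht
    have := h (show (t, μ.rowLen i) ≤ (i, μ.rowLen i) from Prod.mk_le_mk.2 ⟨ht.le, le_rfl⟩)
      (by simp)
    simpa [ht.ne, mem_iff_lt_rowLen] using this
  · rintro h ⟨a, b⟩ ⟨c, d⟩ hle hab
    obtain ⟨hca, hdb⟩ := Prod.mk_le_mk.1 hle
    simp only [coe_insert, Set.mem_insert_iff, Finset.mem_coe, Prod.mk.injEq, mem_cells,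
      mem_iff_lt_rowLen] at hab ⊢
    rcases hab with ⟨rfl, rfl⟩ | hab
    · rcases hca.eq_or_lt with rfl | hca
      · omega
      · exact Or.inr (hdb.trans_lt (h c hca))
    · exact Or.inr (hdb.trans_lt (hab.trans_le (μ.rowLen_anti _ _ hca)))

lemma isLowerSet_erase_mk_rowLen_sub_one_iff {i : ℕ} (hi : 0 < μ.rowLen i) :
    IsLowerSet (↑(μ.cells.erase (i, μ.rowLen i - 1)) : Set (ℕ × ℕ)) ↔
      μ.rowLen (i + 1) < μ.rowLen i := by
  constructor
  · intro h
    refine (μ.rowLen_anti _ _ i.le_succ).lt_of_ne fun heq => ?_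
    have := h (show (i, μ.rowLen i - 1) ≤ (i + 1, μ.rowLen i - 1) from
      Prod.mk_le_mk.2 ⟨i.le_succ, le_rfl⟩)
      (show (i + 1, μ.rowLen i - 1) ∈ _ by simp [mem_iff_lt_rowLen, heq, hi])
    simp at this
  · rintro h ⟨a, b⟩ ⟨c, d⟩ hle hab
    obtain ⟨hca, hdb⟩ := Prod.mk_le_mk.1 hle
    simp only [coe_erase, Set.mem_sdiff, Finset.mem_coe, Set.mem_singleton_iff, Prod.mk.injEq,
      mem_cells, mem_iff_lt_rowLen] at hab ⊢
    refine ⟨hdb.trans_lt (hab.1.trans_le (μ.rowLen_anti _ _ hca)), ?_⟩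
    rintro ⟨rfl, rfl⟩
    rcases hca.eq_or_lt with rfl | hca
    · omega
    · have := μ.rowLen_anti (c + 1) a hca
      omega

end YoungDiagram

lemma prod_range_mul_prod_range_succ {β : Type*} [CommMonoid β] (f g : ℕ → β) (m : ℕ) :
    (∏ s ∈ range m, f s) * ∏ s ∈ range (m + 1), g s =
      g 0 * ∏ s ∈ range m, f s * g (s + 1) := by
  rw [prod_range_succ', prod_mul_distrib]
  ac_rfl

section Eigenvalue

open scoped Classical

variable (n : ℕ) (k ℓ : ℤ) (lam : YoungDiagram)

/- The factors contributed by row `s` to the two products on the left-hand side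
(`rowPsi`, `rowPsiInv`) and to the two corner products on the right-hand side
(`removablePsi`, `addablePsi`). -/
def rowPsi (s : ℕ) : RatField :=
  if (((lam.rowLen s : ℤ) + ℓ : ℤ) : ZMod n) = (((s : ℤ) + 1 + k : ℤ) : ZMod n) then
    psi (xvar lam s * ww) else 1

def rowPsiInv (s : ℕ) : RatField :=
  if (((lam.rowLen s : ℤ) + ℓ + 1 : ℤ) : ZMod n) = (((s : ℤ) + 1 + k : ℤ) : ZMod n) then
    (psi (qthree⁻¹ * xvar lam s * ww))⁻¹ else 1

def removablePsi (s : ℕ) : RatField :=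
  if (s, lam.rowLen s - 1) ∈ lam.cells ∧
      IsLowerSet (↑(lam.cells.erase (s, lam.rowLen s - 1)) : Set (ℕ × ℕ)) ∧
      ((((s : ℤ) + 1 - (lam.rowLen s : ℤ) + k : ℤ) : ZMod n) = (ℓ : ZMod n)) then
    psi (xvar lam s * ww) else 1

def addablePsi (s : ℕ) : RatField :=
  if (s, lam.rowLen s) ∉ lam.cells ∧
      IsLowerSet (↑(insert (s, lam.rowLen s) lam.cells) : Set (ℕ × ℕ)) ∧
      ((((s : ℤ) - (lam.rowLen s : ℤ) + k : ℤ) : ZMod n) = (ℓ : ZMod n)) then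
    (psi (qthree⁻¹ * xvar lam s * ww))⁻¹ else 1

variable {lam}

lemma rowPsi_mul_rowPsiInv_succ_of_rowLen_eq {s : ℕ} (h : lam.rowLen (s + 1) = lam.rowLen s) :
    rowPsi n k ℓ lam s * rowPsiInv n k ℓ lam (s + 1) = 1 := by
  have hcolor : (((lam.rowLen (s + 1) : ℤ) + ℓ + 1 : ℤ) : ZMod n) =
        ((((s + 1 : ℕ) : ℤ) + 1 + k : ℤ) : ZMod n) ↔
      (((lam.rowLen s : ℤ) + ℓ : ℤ) : ZMod n) = (((s : ℤ) + 1 + k : ℤ) : ZMod n) := by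
    rw [h]
    push_cast
    exact ⟨fun h => by linear_combination h, fun h => by linear_combination h⟩
  rw [rowPsi, rowPsiInv, if_congr hcolor rfl rfl, inv_qthree_mul_xvar_succ h]
  split_ifs
  · exact mul_inv_cancel₀ (psi_xvar_mul_ww_ne_zero lam s)
  · exact mul_one 1

lemma removablePsi_eq_rowPsi {s : ℕ} (h : lam.rowLen (s + 1) < lam.rowLen s) :
    removablePsi n k ℓ lam s = rowPsi n k ℓ lam s := by
  have hpos : 0 < lam.rowLen s := (Nat.zero_le _).trans_lt h
  refine if_congr ?_ rfl rfl
  rw [and_iff_right (lam.mk_rowLen_sub_one_mem_cells hpos),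
    and_iff_right ((lam.isLowerSet_erase_mk_rowLen_sub_one_iff hpos).2 h)]
  push_cast
  exact ⟨fun h => by linear_combination -h, fun h => by linear_combination -h⟩

lemma addablePsi_eq_rowPsiInv {s : ℕ} (h : ∀ t < s, lam.rowLen s < lam.rowLen t) :
    addablePsi n k ℓ lam s = rowPsiInv n k ℓ lam s := by
  refine if_congr ?_ rfl rfl
  rw [and_iff_right (lam.mk_rowLen_notMem_cells s),
    and_iff_right ((lam.isLowerSet_insert_mk_rowLen_iff s).2 h)]
  push_cast
  exact ⟨fun h => by linear_combination -h, fun h => by linear_combination -h⟩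

lemma removablePsi_eq_one {s : ℕ} (hs : s < lam.colLen 0)
    (h : lam.rowLen (s + 1) = lam.rowLen s) : removablePsi n k ℓ lam s = 1 := by
  have hpos : 0 < lam.rowLen s :=
    YoungDiagram.mem_iff_lt_rowLen.1 (YoungDiagram.mem_iff_lt_colLen.2 hs)
  refine if_neg fun ⟨_, hlow, _⟩ => ?_
  exact h.not_lt ((lam.isLowerSet_erase_mk_rowLen_sub_one_iff hpos).1 hlow)

lemma addablePsi_succ_eq_one {s : ℕ} (h : lam.rowLen (s + 1) = lam.rowLen s) :
    addablePsi n k ℓ lam (s + 1) = 1 := by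
  refine if_neg fun ⟨_, hlow, _⟩ => ?_
  exact h.not_lt ((lam.isLowerSet_insert_mk_rowLen_iff (s + 1)).1 hlow s s.lt_succ_self)

lemma rowPsi_mul_rowPsiInv_succ {s : ℕ} (hs : s < lam.colLen 0) :
    rowPsi n k ℓ lam s * rowPsiInv n k ℓ lam (s + 1) =
      removablePsi n k ℓ lam s * addablePsi n k ℓ lam (s + 1) := by
  rcases (lam.rowLen_anti s (s + 1) s.le_succ).lt_or_eq with hlt | heq
  · rw [removablePsi_eq_rowPsi n k ℓ hlt, addablePsi_eq_rowPsiInv n k ℓ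
      fun t ht => hlt.trans_le (lam.rowLen_anti t s (Nat.lt_succ_iff.1 ht))]
  · rw [rowPsi_mul_rowPsiInv_succ_of_rowLen_eq n k ℓ heq, removablePsi_eq_one n k ℓ hs heq,
      addablePsi_succ_eq_one n k ℓ heq, mul_one]

end Eigenvalue

open scoped Classical in
theorem vertical_eigenvalue_corners_general (n : ℕ) (k ℓ : ℤ)
    (lam : YoungDiagram) (M : ℕ) (hM : lam.colLen 0 ≤ M) :
    (∏ s ∈ (Finset.range M).filter
        (fun (s : ℕ) => (((lam.rowLen s : ℤ) + ℓ : ℤ) : ZMod n) = (((s : ℤ) + 1 + k : ℤ) : ZMod n)),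
      psi (xvar lam s * ww)) *
    (∏ s ∈ (Finset.range (M + 1)).filter
        (fun (s : ℕ) => (((lam.rowLen s : ℤ) + ℓ + 1 : ℤ) : ZMod n) = (((s : ℤ) + 1 + k : ℤ) : ZMod n)),
      (psi (qthree⁻¹ * xvar lam s * ww))⁻¹)
    =
    (∏ s ∈ (Finset.range (lam.colLen 0)).filter
        (fun (s : ℕ) => (s, lam.rowLen s - 1) ∈ lam.cells ∧
          IsLowerSet (↑(lam.cells.erase (s, lam.rowLen s - 1)) : Set (ℕ × ℕ)) ∧
          ((((s : ℤ) + 1 - (lam.rowLen s : ℤ) + k : ℤ) : ZMod n) = (ℓ : ZMod n))),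
      psi (xvar lam s * ww)) *
    (∏ s ∈ (Finset.range (lam.colLen 0 + 1)).filter
        (fun (s : ℕ) => (s, lam.rowLen s) ∉ lam.cells ∧
          IsLowerSet (↑(insert (s, lam.rowLen s) lam.cells) : Set (ℕ × ℕ)) ∧
          ((((s : ℤ) - (lam.rowLen s : ℤ) + k : ℤ) : ZMod n) = (ℓ : ZMod n))),
      (psi (qthree⁻¹ * xvar lam s * ww))⁻¹) := by
  rw [prod_filter, prod_filter, prod_filter, prod_filter]
  change (∏ s ∈ range M, rowPsi n k ℓ lam s) *
      (∏ s ∈ range (M + 1), rowPsiInv n k ℓ lam s) =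
    (∏ s ∈ range (lam.colLen 0), removablePsi n k ℓ lam s) *
      ∏ s ∈ range (lam.colLen 0 + 1), addablePsi n k ℓ lam s
  have hempty :
      ∀ s ∈ Ico (lam.colLen 0) M, rowPsi n k ℓ lam s * rowPsiInv n k ℓ lam (s + 1) = 1 :=
    fun s hs => rowPsi_mul_rowPsiInv_succ_of_rowLen_eq n k ℓ <| by
      rw [lam.rowLen_eq_zero_of_colLen_le (mem_Ico.1 hs).1,
        lam.rowLen_eq_zero_of_colLen_le ((mem_Ico.1 hs).1.trans s.le_succ)]
  rw [prod_range_mul_prod_range_succ, prod_range_mul_prod_range_succ,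
    ← prod_range_mul_prod_Ico _ hM, prod_eq_one hempty, mul_one,
    addablePsi_eq_rowPsiInv n k ℓ fun t ht => absurd ht t.not_lt_zero]
  exact congrArg _ <|
    prod_congr rfl fun s hs => rowPsi_mul_rowPsiInv_succ n k ℓ (mem_range.1 hs)

open scoped Classical in
/-- The eigenvalue of `K⁺_ℓ(z)` on `|λ)`: for every `M ≥ ℓ(λ)`, the product
`∏_{1≤s≤M, λ_s+ℓ ≡ s+k} ψ(x_s w) ∏_{1≤s≤M+1, λ_s+ℓ+1 ≡ s+k} ψ(q3⁻¹x_s w)⁻¹`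
equals the product over removable corners of color `ℓ` of `ψ(x_s w)` times the
product over addable corners of color `ℓ` of `ψ(q3⁻¹ x_s w)⁻¹` (vacuum charge `k`);
in particular the left-hand side is independent of `M`. -/
theorem vertical_eigenvalue_corners (n : ℕ) (hn : 2 ≤ n) (k ℓ : ℤ)
    (lam : YoungDiagram) (M : ℕ) (hM : lam.colLen 0 ≤ M) :
    (∏ s ∈ (Finset.range M).filter
        (fun (s : ℕ) => (((lam.rowLen s : ℤ) + ℓ : ℤ) : ZMod n) = (((s : ℤ) + 1 + k : ℤ) : ZMod n)),
      psi (xvar lam s * ww)) *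
    (∏ s ∈ (Finset.range (M + 1)).filter
        (fun (s : ℕ) => (((lam.rowLen s : ℤ) + ℓ + 1 : ℤ) : ZMod n) = (((s : ℤ) + 1 + k : ℤ) : ZMod n)),
      (psi (qthree⁻¹ * xvar lam s * ww))⁻¹)
    =
    (∏ s ∈ (Finset.range (lam.colLen 0)).filter
        (fun (s : ℕ) => (s, lam.rowLen s - 1) ∈ lam.cells ∧
          IsLowerSet (↑(lam.cells.erase (s, lam.rowLen s - 1)) : Set (ℕ × ℕ)) ∧
          ((((s : ℤ) + 1 - (lam.rowLen s : ℤ) + k : ℤ) : ZMod n) = (ℓ : ZMod n))),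
      psi (xvar lam s * ww)) *
    (∏ s ∈ (Finset.range (lam.colLen 0 + 1)).filter
        (fun (s : ℕ) => (s, lam.rowLen s) ∉ lam.cells ∧
          IsLowerSet (↑(insert (s, lam.rowLen s) lam.cells) : Set (ℕ × ℕ)) ∧
          ((((s : ℤ) - (lam.rowLen s : ℤ) + k : ℤ) : ZMod n) = (ℓ : ZMod n))),
      (psi (qthree⁻¹ * xvar lam s * ww))⁻¹) :=
  vertical_eigenvalue_corners_general n k ℓ lam M hM

end
end

section
/- Let N ≥ 3 and let q be an invertible element of a commutative ring. Let a and m be the N×N matrices with entries indexed mod N given by a_{ce} = 2δ̄_{c,e} − δ̄_{c−1,e} − δ̄_{c+1,e} (the affine A_{N−1} Cartan matrix) and m_{ce} = δ̄_{c−1,e} − δ̄_{c+1,e} (the skew-symmetric adjacency matrix). Then for all d, f ∈ {0,…,N−1}: Σ_{c,e=0}^{N−1} L_{cd}(q^{−1}) · a_{ce} q^{−m_{ce}} · L_{ef}(q) = (1 − q^N)(1 − q^{−N}) δ_{df}. -/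
/-!
Let `S` be the cyclic shift matrix, `S_{ce} = δ_{e,c+1}`. Since `L(q) = ∑_{k<N} q^k S^k` and
`S^N = 1`, the matrix `1 - q S` inverts `L(q)` up to a scalar: `(1 - q S) L(q) = (1 - q^N) 1`.
For `N ≥ 3` the indices `c - 1`, `c`, `c + 1` are distinct, and the twisted Cartan matrix
`a_{ce} q^{-m_{ce}} = 2 δ_{ce} - q δ_{e,c+1} - q⁻¹ δ_{c,e+1}` factors as `(1 - q⁻¹ Sᵀ) (1 - q S)`.
Hence `L(q⁻¹)ᵀ a q^{-m} L(q) = ((1 - q⁻¹ S) L(q⁻¹))ᵀ ((1 - q S) L(q)) = (1 - q^{-N}) (1 - q^N) 1`.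
-/

open Finset

/-- The `N×N` matrix `L(q)` with entries `L_{cd}(q) = q^{-N⌊(d-c)/N⌋ + d - c}`,
i.e. `q^{d-c}` if `d ≥ c` and `q^{N+d-c}` if `d < c`. -/
def Lmat {R : Type*} [CommRing R] (N : ℕ) (q : Rˣ) : Matrix (Fin N) (Fin N) R :=
  Matrix.of fun c d : Fin N =>
    ((q ^ (-(N : ℤ) * Int.fdiv ((d : ℤ) - (c : ℤ)) (N : ℤ) + (d : ℤ) - (c : ℤ)) : Rˣ) : R)

/-- The affine `A_{N-1}` Cartan matrix `a_{ce} = 2δ̄_{c,e} - δ̄_{c-1,e} - δ̄_{c+1,e}`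
(indices mod `N`). -/
def cartanA (N : ℕ) (c e : Fin N) : ℤ :=
  2 * (if c = e then 1 else 0) - (if ((e : ℕ) + 1) % N = (c : ℕ) then 1 else 0)
    - (if ((c : ℕ) + 1) % N = (e : ℕ) then 1 else 0)

/-- The skew-symmetric adjacency matrix `m_{ce} = δ̄_{c-1,e} - δ̄_{c+1,e}` (indices mod `N`). -/
def adjM (N : ℕ) (c e : Fin N) : ℤ :=
  (if ((e : ℕ) + 1) % N = (c : ℕ) then 1 else 0) - (if ((c : ℕ) + 1) % N = (e : ℕ) then 1 else 0)

open Matrix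

theorem Fin.val_sub_one_add_one {N : ℕ} [NeZero N] (j : Fin N) :
    ((j - 1 : Fin N) : ℕ) + 1 = if j = 0 then N else j := by
  obtain ⟨n, rfl⟩ := Nat.exists_eq_succ_of_ne_zero (NeZero.ne N)
  rw [Fin.coe_sub_one]
  split_ifs with hj
  · rfl
  · have := Fin.pos_of_ne_zero hj
    omega

theorem Fin.val_add_one_mod_eq_iff {N : ℕ} [NeZero N] (a b : Fin N) :
    ((a : ℕ) + 1) % N = b ↔ b = a + 1 := by
  rw [eq_comm, Fin.ext_iff, Fin.val_add, Fin.val_one', Nat.add_mod_mod]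

theorem Lmat_apply {R : Type*} [CommRing R] {N : ℕ} (q : Rˣ) (c d : Fin N) :
    Lmat N q c d = (q : R) ^ ((d - c : Fin N) : ℕ) := by
  rw [Lmat, of_apply, ← Units.val_pow_eq_pow_val, ← zpow_natCast, Fin.coe_int_sub_eq_mod,
    Int.emod_def, Int.fdiv_eq_ediv_of_nonneg _ (Int.natCast_nonneg N)]
  ring_nf

def shiftMatrix (N : ℕ) [NeZero N] (R : Type*) [Zero R] [One R] : Matrix (Fin N) (Fin N) R :=
  (Equiv.addRight (1 : Fin N)).permMatrix R

section shiftMatrix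

variable {N : ℕ} [NeZero N]

theorem shiftMatrix_apply {R : Type*} [Zero R] [One R] (c e : Fin N) :
    shiftMatrix N R c e = if e = c + 1 then 1 else 0 := by
  simp [shiftMatrix, PEquiv.toMatrix_apply, eq_comm]

theorem shiftMatrix_mul_apply {R : Type*} [NonAssocSemiring R] (A : Matrix (Fin N) (Fin N) R)
    (c f : Fin N) : (shiftMatrix N R * A) c f = A (c + 1) f := by
  rw [shiftMatrix, PEquiv.toMatrix_toPEquiv_mul]
  rfl

theorem shiftMatrix_transpose_mul_self {R : Type*} [NonAssocSemiring R] :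
    (shiftMatrix N R)ᵀ * shiftMatrix N R = 1 := by
  rw [shiftMatrix, transpose_permMatrix, ← permMatrix_mul, mul_inv_cancel, permMatrix_one]

variable {R : Type*} [CommRing R]

theorem one_sub_smul_shiftMatrix_mul_Lmat (q : Rˣ) :
    (1 - (q : R) • shiftMatrix N R) * Lmat N q = (1 - (q : R) ^ N) • 1 := by
  ext c f
  rw [sub_mul, one_mul, smul_mul_assoc, Matrix.sub_apply, Matrix.smul_apply, shiftMatrix_mul_apply,
    Lmat_apply, Lmat_apply, sub_add_eq_sub_sub, smul_eq_mul, ← pow_succ', Fin.val_sub_one_add_one,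
    Matrix.smul_apply, one_apply]
  rcases eq_or_ne c f with rfl | hcf
  · simp
  · simp [sub_eq_zero, hcf, hcf.symm]

theorem of_cartanA_mul_zpow_neg_adjM (hN : 3 ≤ N) (q : Rˣ) :
    Matrix.of (fun c e => (cartanA N c e : R) * ((q ^ (-adjM N c e) : Rˣ) : R)) =
      (1 - ((q⁻¹ : Rˣ) : R) • (shiftMatrix N R)ᵀ) * (1 - (q : R) • shiftMatrix N R) := by
  have hSS : ((q⁻¹ : Rˣ) : R) • (shiftMatrix N R)ᵀ * ((q : R) • shiftMatrix N R) = 1 := by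
    rw [smul_mul_smul_comm, shiftMatrix_transpose_mul_self, Units.inv_mul, one_smul]
  rw [sub_mul, mul_sub, mul_sub, hSS, one_mul, mul_one, one_mul]
  ext c e
  simp only [cartanA, adjM, Fin.val_add_one_mod_eq_iff, of_apply, Matrix.sub_apply, one_apply,
    Matrix.smul_apply, transpose_apply, shiftMatrix_apply]
  have h1 (x : Fin N) : x + 1 ≠ x := by
    rw [Ne, add_eq_left, Fin.ext_iff, Fin.val_one', Fin.val_zero, Nat.mod_eq_of_lt (by omega)]
    omega
  have h2 (x : Fin N) : x + 1 + 1 ≠ x := by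
    rw [Ne, add_assoc, add_eq_left, Fin.ext_iff, Fin.val_add, Fin.val_one', Fin.val_zero,
      Nat.mod_eq_of_lt (by omega : 1 < N), Nat.mod_eq_of_lt (by omega)]
    omega
  by_cases hce : c = e
  · subst hce
    norm_num [(h1 c).symm]
  by_cases hfwd : e = c + 1
  · subst hfwd
    simp [hce, (h2 c).symm]
  by_cases hbwd : c = e + 1
  · subst hbwd
    simp [hce, (h2 e).symm]
  simp [hce, hfwd, hbwd]

end shiftMatrix

theorem sum_sum_mul_mul_eq_transpose_mul_mul_apply {ι κ μ ν R : Type*} [Fintype κ] [Fintype μ]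
    [CommSemiring R] (A : Matrix κ ι R) (B : Matrix κ μ R) (C : Matrix μ ν R) (d : ι) (f : ν) :
    ∑ c, ∑ e, A c d * B c e * C e f = (Aᵀ * B * C) d f := by
  simp only [mul_apply, transpose_apply, sum_mul]
  exact sum_comm

/-- Orthogonality identity showing the modified Cartan generators form independent
Heisenberg algebras:
`Σ_{c,e} L_{cd}(q⁻¹) a_{ce} q^{-m_{ce}} L_{ef}(q) = (1-q^N)(1-q^{-N}) δ_{df}`. -/
theorem Lmat_cartan_orthogonality {R : Type*} [CommRing R] (N : ℕ) (hN : 3 ≤ N) (q : Rˣ)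
    (d f : Fin N) :
    (∑ c : Fin N, ∑ e : Fin N,
      Lmat N q⁻¹ c d * ((cartanA N c e : ℤ) : R) * ((q ^ (-(adjM N c e)) : Rˣ) : R) *
        Lmat N q e f)
    = (1 - (q : R) ^ N) * (1 - ((q ^ (-(N : ℤ)) : Rˣ) : R)) *
        (if d = f then (1 : R) else 0) := by
  have : NeZero N := ⟨by omega⟩
  set S := shiftMatrix N R
  have hsum := sum_sum_mul_mul_eq_transpose_mul_mul_apply (Lmat N q⁻¹)
    (Matrix.of fun c e => (cartanA N c e : R) * ((q ^ (-adjM N c e) : Rˣ) : R)) (Lmat N q) d f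
  simp only [of_apply, ← mul_assoc] at hsum
  have hfactor : (Lmat N q⁻¹)ᵀ * ((1 - ((q⁻¹ : Rˣ) : R) • Sᵀ) * (1 - (q : R) • S)) * Lmat N q
      = ((1 - ((q⁻¹ : Rˣ) : R) • S) * Lmat N q⁻¹)ᵀ * ((1 - (q : R) • S) * Lmat N q) := by
    rw [transpose_mul, transpose_sub, transpose_one, transpose_smul]
    simp only [Matrix.mul_assoc]
  rw [hsum, of_cartanA_mul_zpow_neg_adjM hN, hfactor, one_sub_smul_shiftMatrix_mul_Lmat,
    one_sub_smul_shiftMatrix_mul_Lmat, _root_.zpow_neg, zpow_natCast, ← inv_pow,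
    Units.val_pow_eq_pow_val]
  simp [one_apply, mul_comm]
end

section
/- Let N ≥ 1, let λ^{(1)}, …, λ^{(N)} be Young diagrams, and let m, c, ε1, ε2, a_1, …, a_N be elements of a commutative ring with Σ_{a=1}^N a_a = 0. Then Σ_{a,b=1}^{N} [ Σ_{(i,j)∈λ^{(a)}} ( (m + a_a − a_b + c − ε2(λ^{(a)}_i − j) + ε1((λ^{(b)})'_j − i + 1))² − (a_a − a_b + c − ε2(λ^{(a)}_i − j) + ε1((λ^{(b)})'_j − i + 1))² ) + Σ_{(i,j)∈λ^{(b)}} ( (m + a_a − a_b + c + ε2(λ^{(b)}_i − j + 1) − ε1((λ^{(a)})'_j − i))² − (a_a − a_b + c + ε2(λ^{(b)}_i − j + 1) − ε1((λ^{(a)})'_j − i))² ) ] = 2 N m (m + 2c + ε1 + ε2) · Σ_{a=1}^{N} |λ^{(a)}|. In particular, the Coulomb moduli a_a drop out of the sum. -/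
open Finset

/-!
Each summand is a difference of squares `(m + x)² - x² = m (m + 2x)`, hence linear in the
shifted weight `x`. Exchanging `a ↔ b` in the second inner sum pairs the box `(i, j)` of
`λ^(a)` seen from `(a, b)` in the first sum with the same box seen from `(b, a)` in the second:
the two weights add up to `2c + ε1 + ε2`, so every box of `λ^(a)` contributes
`2m (m + 2c + ε1 + ε2)` once for each of the `N` values of `b`.
-/

theorem Finset.sum_sum_add_swap {ι M : Type*} [AddCommMonoid M] (s : Finset ι)
    (f g : ι → ι → M) :
    ∑ i ∈ s, ∑ j ∈ s, (f i j + g i j) = ∑ i ∈ s, ∑ j ∈ s, (f i j + g j i) := by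
  simp only [sum_add_distrib]
  rw [sum_comm (f := g)]

theorem modular_prefactor_cancellation_general {R : Type*} [CommRing R] (N : ℕ)
    (Λ : Fin N → YoungDiagram) (m cst e1 e2 : R) (a : Fin N → R) :
    (∑ i : Fin N, ∑ j : Fin N,
      ((∑ c ∈ (Λ i).cells,
          ((m + a i - a j + cst - e2 * (((Λ i).rowLen c.1 : R) - ((c.2 : R) + 1))
              + e1 * (((Λ j).colLen c.2 : R) - (c.1 : R))) ^ 2
           - (a i - a j + cst - e2 * (((Λ i).rowLen c.1 : R) - ((c.2 : R) + 1))
              + e1 * (((Λ j).colLen c.2 : R) - (c.1 : R))) ^ 2))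
       + (∑ c ∈ (Λ j).cells,
          ((m + a i - a j + cst + e2 * (((Λ j).rowLen c.1 : R) - (c.2 : R))
              - e1 * (((Λ i).colLen c.2 : R) - ((c.1 : R) + 1))) ^ 2
           - (a i - a j + cst + e2 * (((Λ j).rowLen c.1 : R) - (c.2 : R))
              - e1 * (((Λ i).colLen c.2 : R) - ((c.1 : R) + 1))) ^ 2))))
    = 2 * (N : R) * m * (m + 2 * cst + e1 + e2) * ∑ i : Fin N, ((Λ i).cells.card : R) := by
  calc _ = ∑ i : Fin N, ∑ _j : Fin N, ∑ _c ∈ (Λ i).cells, 2 * m * (m + 2 * cst + e1 + e2) := by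
        rw [sum_sum_add_swap]
        refine sum_congr rfl fun i _ => sum_congr rfl fun j _ => ?_
        rw [← sum_add_distrib]
        exact sum_congr rfl fun c _ => by ring
    _ = _ := by
        simp only [sum_const, card_univ, Fintype.card_fin, nsmul_eq_mul, mul_sum]
        exact sum_congr rfl fun i _ => by ring

/-- The cancellation identity governing the modular transformation of the instanton
series of the 6d `U(N)` theory with adjoint mass `m`: for `N`-tuples of Young diagrams
`Λ a`, Coulomb moduli `a_a` summing to zero, and any `c` (in the application
`c = (1-τ)/2`), the `a`-dependence cancels and the double sum collapses to
`2 N m (m + 2c + ε1 + ε2) Σ_a |Λ a|`. Boxes `(i,j)` are 1-based; the cell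
`c = (i-1, j-1)` is 0-based, so `λ_i - j = rowLen c.1 - (c.2+1)` and
`λ'_j - i = colLen c.2 - (c.1+1)`. -/
theorem modular_prefactor_cancellation {R : Type*} [CommRing R] (N : ℕ) (hN : 1 ≤ N)
    (Λ : Fin N → YoungDiagram) (m cst e1 e2 : R) (a : Fin N → R)
    (ha : ∑ i : Fin N, a i = 0) :
    (∑ i : Fin N, ∑ j : Fin N,
      ((∑ c ∈ (Λ i).cells,
          ((m + a i - a j + cst - e2 * (((Λ i).rowLen c.1 : R) - ((c.2 : R) + 1))
              + e1 * (((Λ j).colLen c.2 : R) - (c.1 : R))) ^ 2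
           - (a i - a j + cst - e2 * (((Λ i).rowLen c.1 : R) - ((c.2 : R) + 1))
              + e1 * (((Λ j).colLen c.2 : R) - (c.1 : R))) ^ 2))
       + (∑ c ∈ (Λ j).cells,
          ((m + a i - a j + cst + e2 * (((Λ j).rowLen c.1 : R) - (c.2 : R))
              - e1 * (((Λ i).colLen c.2 : R) - ((c.1 : R) + 1))) ^ 2
           - (a i - a j + cst + e2 * (((Λ j).rowLen c.1 : R) - (c.2 : R))
              - e1 * (((Λ i).colLen c.2 : R) - ((c.1 : R) + 1))) ^ 2))))
    = 2 * (N : R) * m * (m + 2 * cst + e1 + e2) * ∑ i : Fin N, ((Λ i).cells.card : R) :=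
  modular_prefactor_cancellation_general N Λ m cst e1 e2 a
end
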